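/- arXiv:2212.03444 — 2 statements merged into one kernel-verified Lean document; each statement's English description precedes it below -/
import Mathlib

section
/- Fix s > 0, μ ∈ ℝ^d, and measurable functions μ̂ : ℝ^d → ℝ^d and h : ℝ^d → ℝ with s^{-1} + h(x) > 0 and suitable integrability. Define, for t > 0, ξ̂_t(x) = s^{-1} + t^{-1} + h(x) and the risk difference G(t) = E_x[(d/2) log((s^{-1}+t^{-1})/ξ̂_t(x)) - (d t^{-1} + ‖μ - μ̂(x)‖²)/(2 ξ̂_t(x))] + d/2 + E_x[(d t^{-1} + ‖μ - x‖²)/(2(s^{-1}+t^{-1}))] - d/2, where x ~ N_d(μ, s^{-1} I_d). Then lim_{t→0} G'(t) = (E_x[‖x - μ‖²] - E_x[‖μ̂(x) - μ‖²])/2 = (d s^{-1} - E_x[‖μ̂(x) - μ‖²])/2. -/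
open MeasureTheory Filter Real

variable {d : ℕ}

lemma gauss_integrable (d : ℕ) {b : ℝ} (hb : 0 < b) :
    Integrable (fun v : EuclideanSpace ℝ (Fin d) => Real.exp (-b * ‖v‖ ^ 2)) := by
  have h := (GaussianFourier.integrable_cexp_neg_mul_sq_norm_add
    (V := EuclideanSpace ℝ (Fin d)) (b := (b : ℂ)) (by simpa using hb) 0 0).norm
  refine h.congr (Filter.Eventually.of_forall fun v => ?_)
  simp [Complex.norm_exp]
  left; norm_cast

lemma gauss_integral (d : ℕ) {b : ℝ} (hb : 0 < b) :
    ∫ v : EuclideanSpace ℝ (Fin d), Real.exp (-b * ‖v‖ ^ 2) = (π / b) ^ ((d : ℝ) / 2) := by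
  have := GaussianFourier.integral_rexp_neg_mul_sq_norm (V := EuclideanSpace ℝ (Fin d)) hb
  simpa [finrank_euclideanSpace_fin] using this

lemma sq_mul_exp_le {b x : ℝ} (hb : 0 < b) (hx : 0 ≤ x) :
    x * Real.exp (-b * x) ≤ (2 / b) * Real.exp (-(b / 2) * x) := by
  have h1 : (b / 2) * x ≤ Real.exp ((b / 2) * x) := by
    have := Real.add_one_le_exp ((b / 2) * x)
    nlinarith [Real.exp_pos ((b/2)*x)]
  have h2 : 0 < Real.exp ((b / 2) * x) := Real.exp_pos _
  have key : x ≤ (2 / b) * Real.exp ((b / 2) * x) := by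
    rw [div_mul_eq_mul_div, le_div_iff₀ hb]
    nlinarith
  have : Real.exp (-b * x) = Real.exp (-(b/2) * x) / Real.exp ((b/2) * x) := by
    rw [← Real.exp_sub]; ring_nf
  rw [this]
  have hep : 0 < Real.exp (-(b/2) * x) := Real.exp_pos _
  calc x * (Real.exp (-(b/2)*x) / Real.exp ((b/2)*x))
      ≤ ((2/b) * Real.exp ((b/2)*x)) * (Real.exp (-(b/2)*x) / Real.exp ((b/2)*x)) := by
        apply mul_le_mul_of_nonneg_right key (by positivity)
    _ = (2/b) * Real.exp (-(b/2)*x) := by field_simp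

lemma gauss_sq_integrable (d : ℕ) {b : ℝ} (hb : 0 < b) :
    Integrable (fun v : EuclideanSpace ℝ (Fin d) => ‖v‖ ^ 2 * Real.exp (-b * ‖v‖ ^ 2)) := by
  refine ((gauss_integrable d (show 0 < b / 2 by linarith)).const_mul (2 / b)).mono
    ?_ (Filter.Eventually.of_forall fun v => ?_)
  · apply Measurable.aestronglyMeasurable
    exact (measurable_norm.pow_const 2).mul ((measurable_norm.pow_const 2).const_mul (-b)).exp
  · have h1 : 0 ≤ ‖v‖ ^ 2 * Real.exp (-b * ‖v‖ ^ 2) := by positivity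
    rw [Real.norm_of_nonneg h1, Real.norm_of_nonneg (by positivity)]
    exact sq_mul_exp_le hb (by positivity)

lemma gauss_sq_integral (d : ℕ) {b : ℝ} (hb : 0 < b) :
    ∫ v : EuclideanSpace ℝ (Fin d), ‖v‖ ^ 2 * Real.exp (-b * ‖v‖ ^ 2)
      = ((d : ℝ) / 2) * π ^ ((d : ℝ) / 2) * b ^ (-(d : ℝ) / 2 - 1) := by
  -- differentiate b ↦ ∫ exp (-b‖v‖²) under the integral sign
  set F : ℝ → EuclideanSpace ℝ (Fin d) → ℝ := fun c v => Real.exp (-c * ‖v‖ ^ 2) with hF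
  set F' : ℝ → EuclideanSpace ℝ (Fin d) → ℝ :=
    fun c v => -‖v‖ ^ 2 * Real.exp (-c * ‖v‖ ^ 2) with hF'
  have hmeas : ∀ c : ℝ, AEStronglyMeasurable (F c) volume := fun c =>
    (((measurable_norm.pow_const 2).const_mul (-c)).exp).aestronglyMeasurable
  have key := hasDerivAt_integral_of_dominated_loc_of_deriv_le (F := F) (F' := F')
    (x₀ := b) (s := Metric.ball b (b / 2)) (bound := fun v => ‖v‖ ^ 2 * Real.exp (-(b / 2) * ‖v‖ ^ 2))
    (Metric.ball_mem_nhds _ (by linarith)) (Filter.Eventually.of_forall hmeas) (gauss_integrable d hb)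
    ((((measurable_norm.pow_const 2).neg.mul
      ((measurable_norm.pow_const 2).const_mul (-b)).exp)).aestronglyMeasurable)
    (Filter.Eventually.of_forall fun v => fun c hc => ?_)
    (gauss_sq_integrable d (show 0 < b / 2 by linarith))
    (Filter.Eventually.of_forall fun v => fun c hc => ?_)
  · -- now exploit the closed form of the integral
    have heq : (fun c => ∫ v : EuclideanSpace ℝ (Fin d), F c v)
        =ᶠ[nhds b] (fun c => π ^ ((d : ℝ) / 2) * c ^ (-(d : ℝ) / 2)) := by
      filter_upwards [IsOpen.mem_nhds isOpen_Ioi hb] with c hc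
      have hc' : (0 : ℝ) < c := hc
      rw [gauss_integral d hc', Real.div_rpow (le_of_lt Real.pi_pos) hc'.le,
        neg_div, Real.rpow_neg hc'.le, div_eq_mul_inv]
    have hd1 : HasDerivAt (fun c : ℝ => π ^ ((d : ℝ) / 2) * c ^ (-(d : ℝ) / 2))
        (∫ v : EuclideanSpace ℝ (Fin d), F' b v) b :=
      key.2.congr_of_eventuallyEq heq.symm
    have hd2 : HasDerivAt (fun c : ℝ => π ^ ((d : ℝ) / 2) * c ^ (-(d : ℝ) / 2))
        (π ^ ((d : ℝ) / 2) * ((-(d : ℝ) / 2) * b ^ (-(d : ℝ) / 2 - 1))) b :=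
      (Real.hasDerivAt_rpow_const (Or.inl (ne_of_gt hb))).const_mul _
    have hval := hd1.unique hd2
    have hneg : (∫ v : EuclideanSpace ℝ (Fin d), F' b v)
        = -∫ v : EuclideanSpace ℝ (Fin d), ‖v‖ ^ 2 * Real.exp (-b * ‖v‖ ^ 2) := by
      rw [← integral_neg]
      congr 1; funext v; simp [hF']
    rw [hneg] at hval
    have := neg_eq_iff_eq_neg.mp hval
    rw [this]; ring
  · have hc2 : b / 2 < c := by
      have := abs_lt.mp (Metric.mem_ball.mp hc)
      linarith [this.1]
    have h0 : ‖F' c v‖ = ‖v‖ ^ 2 * Real.exp (-c * ‖v‖ ^ 2) := by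
      simp only [hF', norm_mul, norm_neg, Real.norm_of_nonneg (sq_nonneg ‖v‖),
        Real.norm_of_nonneg (Real.exp_pos _).le]
    rw [h0]
    apply mul_le_mul_of_nonneg_left _ (sq_nonneg ‖v‖)
    apply Real.exp_le_exp.mpr
    nlinarith [sq_nonneg ‖v‖]
  · have hK : HasDerivAt (fun c : ℝ => -c * ‖v‖ ^ 2) (-‖v‖ ^ 2) c := by
      simpa using ((hasDerivAt_id c).neg.mul_const (‖v‖ ^ 2))
    have := hK.exp
    simpa [hF, hF', mul_comm] using this

section GP
variable {d : ℕ} {s : ℝ} {μ : EuclideanSpace ℝ (Fin d)} {gp : EuclideanSpace ℝ (Fin d) → ℝ}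

lemma gp_eq' (hs : 0 < s)
    (hgp : ∀ x, gp x =
      (2 * Real.pi * s⁻¹) ^ (-(d : ℝ) / 2) * Real.exp (-‖x - μ‖ ^ 2 / (2 * s⁻¹))) :
    ∀ x, gp x = (2 * Real.pi * s⁻¹) ^ (-(d : ℝ) / 2)
      * Real.exp (-(s / 2) * ‖x - μ‖ ^ 2) := by
  intro x
  rw [hgp x]
  congr 1
  congr 1
  field_simp

lemma gp_integrable (hs : 0 < s)
    (hgp : ∀ x, gp x =
      (2 * Real.pi * s⁻¹) ^ (-(d : ℝ) / 2) * Real.exp (-‖x - μ‖ ^ 2 / (2 * s⁻¹))) :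
    Integrable gp := by
  have h1 : Integrable (fun x : EuclideanSpace ℝ (Fin d) =>
      Real.exp (-(s / 2) * ‖x - μ‖ ^ 2)) :=
    (gauss_integrable d (show 0 < s / 2 by linarith)).comp_sub_right μ
  refine (h1.const_mul ((2 * Real.pi * s⁻¹) ^ (-(d : ℝ) / 2))).congr
    (Filter.Eventually.of_forall fun x => ?_)
  exact (gp_eq' hs hgp x).symm

lemma gp_integral (hs : 0 < s)
    (hgp : ∀ x, gp x =
      (2 * Real.pi * s⁻¹) ^ (-(d : ℝ) / 2) * Real.exp (-‖x - μ‖ ^ 2 / (2 * s⁻¹))) :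
    ∫ x, gp x = 1 := by
  have hb : (0 : ℝ) < s / 2 := by linarith
  have hbase : (0 : ℝ) < 2 * Real.pi * s⁻¹ := by positivity
  calc ∫ x, gp x
      = ∫ x : EuclideanSpace ℝ (Fin d), (2 * Real.pi * s⁻¹) ^ (-(d : ℝ) / 2)
          * Real.exp (-(s / 2) * ‖x - μ‖ ^ 2) := by
        congr 1; funext x; exact gp_eq' hs hgp x
    _ = (2 * Real.pi * s⁻¹) ^ (-(d : ℝ) / 2)
          * ∫ x : EuclideanSpace ℝ (Fin d), Real.exp (-(s / 2) * ‖x - μ‖ ^ 2) := by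
        rw [integral_const_mul]
    _ = (2 * Real.pi * s⁻¹) ^ (-(d : ℝ) / 2)
          * ∫ v : EuclideanSpace ℝ (Fin d), Real.exp (-(s / 2) * ‖v‖ ^ 2) := by
        rw [integral_sub_right_eq_self (fun v : EuclideanSpace ℝ (Fin d) =>
          Real.exp (-(s / 2) * ‖v‖ ^ 2)) μ]
    _ = (2 * Real.pi * s⁻¹) ^ (-(d : ℝ) / 2)
          * (2 * Real.pi * s⁻¹) ^ ((d : ℝ) / 2) := by
        rw [gauss_integral d hb]
        congr 2
        field_simp
    _ = 1 := by
        rw [← Real.rpow_add hbase]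
        ring_nf
        exact Real.rpow_zero _

lemma gp_moment (hs : 0 < s)
    (hgp : ∀ x, gp x =
      (2 * Real.pi * s⁻¹) ^ (-(d : ℝ) / 2) * Real.exp (-‖x - μ‖ ^ 2 / (2 * s⁻¹))) :
    ∫ x, gp x * ‖x - μ‖ ^ 2 = d * s⁻¹ := by
  have hb : (0 : ℝ) < s / 2 := by linarith
  have hbase : (0 : ℝ) < 2 * Real.pi * s⁻¹ := by positivity
  have hπ : (2 * Real.pi * s⁻¹) = Real.pi / (s / 2) := by
    field_simp
  calc ∫ x, gp x * ‖x - μ‖ ^ 2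
      = (2 * Real.pi * s⁻¹) ^ (-(d : ℝ) / 2)
          * ∫ x : EuclideanSpace ℝ (Fin d),
            ‖x - μ‖ ^ 2 * Real.exp (-(s / 2) * ‖x - μ‖ ^ 2) := by
        rw [← integral_const_mul]
        congr 1; funext x; rw [gp_eq' hs hgp x]; ring
    _ = (2 * Real.pi * s⁻¹) ^ (-(d : ℝ) / 2)
          * ∫ v : EuclideanSpace ℝ (Fin d), ‖v‖ ^ 2 * Real.exp (-(s / 2) * ‖v‖ ^ 2) := by
        rw [integral_sub_right_eq_self (fun v : EuclideanSpace ℝ (Fin d) =>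
          ‖v‖ ^ 2 * Real.exp (-(s / 2) * ‖v‖ ^ 2)) μ]
    _ = (2 * Real.pi * s⁻¹) ^ (-(d : ℝ) / 2)
          * (((d : ℝ) / 2) * Real.pi ^ ((d : ℝ) / 2) * (s / 2) ^ (-(d : ℝ) / 2 - 1)) := by
        rw [gauss_sq_integral d hb]
    _ = (d : ℝ) * s⁻¹ := by
        rw [hπ, Real.div_rpow Real.pi_pos.le hb.le]
        have h1 : Real.pi ^ (-(d:ℝ)/2) * Real.pi ^ ((d:ℝ)/2) = 1 := by
          rw [← Real.rpow_add Real.pi_pos]; ring_nf; exact Real.rpow_zero _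
        have h2 : (s/2:ℝ) ^ (-(d:ℝ)/2 - 1) = (s/2) ^ (-(d:ℝ)/2) * (s/2)⁻¹ := by
          rw [← Real.rpow_neg_one (s/2), ← Real.rpow_add hb, sub_eq_add_neg]
        have hq : ((s/2:ℝ) ^ (-(d:ℝ)/2)) ≠ 0 := by positivity
        rw [h2]
        have key : Real.pi ^ (-(d:ℝ)/2) / (s/2) ^ (-(d:ℝ)/2)
            * ((d:ℝ)/2 * Real.pi ^ ((d:ℝ)/2) * ((s/2) ^ (-(d:ℝ)/2) * (s/2)⁻¹))
            = (Real.pi ^ (-(d:ℝ)/2) * Real.pi ^ ((d:ℝ)/2))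
              * ((s/2) ^ (-(d:ℝ)/2) / (s/2) ^ (-(d:ℝ)/2)) * ((d:ℝ)/2 * (s/2)⁻¹) := by
          ring
        rw [key, h1, div_self hq]
        field_simp

lemma gp_moment_integrable (hs : 0 < s)
    (hgp : ∀ x, gp x =
      (2 * Real.pi * s⁻¹) ^ (-(d : ℝ) / 2) * Real.exp (-‖x - μ‖ ^ 2 / (2 * s⁻¹))) :
    Integrable (fun x => gp x * ‖x - μ‖ ^ 2) := by
  have h1 : Integrable (fun x : EuclideanSpace ℝ (Fin d) =>
      ‖x - μ‖ ^ 2 * Real.exp (-(s / 2) * ‖x - μ‖ ^ 2)) :=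
    (gauss_sq_integrable d (show 0 < s / 2 by linarith)).comp_sub_right μ
  refine (h1.const_mul ((2 * Real.pi * s⁻¹) ^ (-(d : ℝ) / 2))).congr
    (Filter.Eventually.of_forall fun x => ?_)
  simp only [gp_eq' hs hgp]; ring

end GP

set_option maxHeartbeats 2000000 in
lemma phi_hasDerivAt (d : ℕ) {s t H : ℝ} (c : ℝ) (hs : 0 < s) (ht : 0 < t)
    (hH : 0 < s⁻¹ + H) :
    HasDerivAt (fun u : ℝ => ((d : ℝ) / 2) * Real.log ((s⁻¹ + u⁻¹) / (s⁻¹ + u⁻¹ + H)) -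
        ((d : ℝ) * u⁻¹ + c) / (2 * (s⁻¹ + u⁻¹ + H)))
      (((d : ℝ) * (s⁻¹ + H) - c) / (2 * (1 + t * (s⁻¹ + H)) ^ 2) -
        (d : ℝ) * H / (2 * (1 + t * s⁻¹) * (1 + t * (s⁻¹ + H)))) t := by
  have hsi : 0 < s⁻¹ := inv_pos.mpr hs
  have hti : 0 < t⁻¹ := inv_pos.mpr ht
  have ha : 0 < s⁻¹ + t⁻¹ := by linarith
  have haH : 0 < s⁻¹ + t⁻¹ + H := by linarith
  -- derivative of the log-difference version
  have h1 : HasDerivAt (fun u : ℝ => s⁻¹ + u⁻¹) (-(t ^ 2)⁻¹) t :=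
    (hasDerivAt_inv (ne_of_gt ht)).const_add s⁻¹
  have h1H : HasDerivAt (fun u : ℝ => s⁻¹ + u⁻¹ + H) (-(t ^ 2)⁻¹) t := h1.add_const H
  have h2 : HasDerivAt (fun u : ℝ => Real.log (s⁻¹ + u⁻¹)) (-(t ^ 2)⁻¹ / (s⁻¹ + t⁻¹)) t :=
    h1.log (ne_of_gt ha)
  have h3 : HasDerivAt (fun u : ℝ => Real.log (s⁻¹ + u⁻¹ + H))
      (-(t ^ 2)⁻¹ / (s⁻¹ + t⁻¹ + H)) t := h1H.log (ne_of_gt haH)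
  have h4 : HasDerivAt (fun u : ℝ => (d : ℝ) * u⁻¹ + c) ((d : ℝ) * -(t ^ 2)⁻¹) t :=
    (((hasDerivAt_inv (ne_of_gt ht)).const_mul (d : ℝ))).add_const c
  have h5 : HasDerivAt (fun u : ℝ => 2 * (s⁻¹ + u⁻¹ + H)) (2 * -(t ^ 2)⁻¹) t :=
    h1H.const_mul 2
  have h6 : (2 * (s⁻¹ + t⁻¹ + H)) ≠ 0 := by positivity
  have h7 := ((h2.sub h3).const_mul ((d : ℝ) / 2)).sub (h4.div h5 h6)
  -- rewrite the function using log of quotient on a neighbourhood of t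
  have heq : (fun u : ℝ => ((d : ℝ) / 2) * (Real.log (s⁻¹ + u⁻¹) - Real.log (s⁻¹ + u⁻¹ + H)) -
        ((d : ℝ) * u⁻¹ + c) / (2 * (s⁻¹ + u⁻¹ + H)))
      =ᶠ[nhds t] (fun u : ℝ => ((d : ℝ) / 2) * Real.log ((s⁻¹ + u⁻¹) / (s⁻¹ + u⁻¹ + H)) -
        ((d : ℝ) * u⁻¹ + c) / (2 * (s⁻¹ + u⁻¹ + H))) := by
    filter_upwards [IsOpen.mem_nhds isOpen_Ioi ht] with u hu
    have hui : 0 < u⁻¹ := inv_pos.mpr hu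
    have hx1 : (0:ℝ) < s⁻¹ + u⁻¹ := by positivity
    have hx2 : (0:ℝ) < s⁻¹ + u⁻¹ + H := by linarith
    rw [Real.log_div (ne_of_gt hx1) (ne_of_gt hx2)]
  have h8 := h7.congr_of_eventuallyEq heq.symm
  refine h8.congr_deriv (Eq.symm ?_)
  have e1 : 1 + t * s⁻¹ = t * (s⁻¹ + t⁻¹) := by field_simp; ring
  have e2 : 1 + t * (s⁻¹ + H) = t * (s⁻¹ + t⁻¹ + H) := by field_simp; ring
  have hA : (s⁻¹ + t⁻¹) ≠ 0 := ne_of_gt ha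
  have hB : (s⁻¹ + t⁻¹ + H) ≠ 0 := ne_of_gt haH
  have eSH : s⁻¹ + H = (s⁻¹ + t⁻¹ + H) - t⁻¹ := by ring
  have eH : (d : ℝ) * H = (d : ℝ) * ((s⁻¹ + t⁻¹ + H) - (s⁻¹ + t⁻¹)) := by ring
  rw [e1, e2, eSH, eH]
  generalize hg : s⁻¹ + t⁻¹ + H = B at hB ⊢
  generalize hg2 : s⁻¹ + t⁻¹ = A at hA ⊢
  field_simp [ne_of_gt ht, hA, hB]
  ring

lemma abs_log_le {y : ℝ} (hy : 0 < y) : |Real.log y| ≤ y + y⁻¹ := by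
  rcases le_or_gt 1 y with h1 | h1
  · rw [abs_of_nonneg (Real.log_nonneg h1)]
    have := Real.log_le_sub_one_of_pos hy
    have : 0 < y⁻¹ := inv_pos.mpr hy
    linarith [Real.log_le_sub_one_of_pos hy]
  · rw [abs_of_nonpos (Real.log_nonpos hy.le h1.le), ← Real.log_inv]
    have h2 : 0 < y⁻¹ := inv_pos.mpr hy
    linarith [Real.log_le_sub_one_of_pos h2]

set_option maxHeartbeats 2000000 in
/-- Theorem 1 (i) of the paper.  Let `x ~ N_d(μ, s⁻¹ I_d)` with density `gp`, and for
`t > 0` let `G t` be the Kullback–Leibler risk difference between the uniform-prior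
predictive density `N_d(x, (s⁻¹+t⁻¹) I_d)` and the extended plug-in density
`N_d(μ̂(x), (s⁻¹+t⁻¹+h(x)) I_d)` when the future observation is `N_d(μ, t⁻¹ I_d)`.
Then `G'(t) → (E‖x-μ‖² - E‖μ̂(x)-μ‖²)/2` as `t → 0⁺`, and `E‖x-μ‖² = d s⁻¹`. -/
theorem infinitesimal_risk_isotropic (d : ℕ) (s : ℝ) (hs : 0 < s)
    (μ : EuclideanSpace ℝ (Fin d))
    (μhat : EuclideanSpace ℝ (Fin d) → EuclideanSpace ℝ (Fin d)) (hμhat : Measurable μhat)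
    (h : EuclideanSpace ℝ (Fin d) → ℝ) (hh : Measurable h)
    (hpos : ∀ x, 0 < s⁻¹ + h x)
    (gp : EuclideanSpace ℝ (Fin d) → ℝ)
    (hgp : ∀ x, gp x =
      (2 * Real.pi * s⁻¹) ^ (-(d : ℝ) / 2) * Real.exp (-‖x - μ‖ ^ 2 / (2 * s⁻¹)))
    -- suitable integrability
    (hint1 : Integrable (fun x => gp x * ‖μhat x - μ‖ ^ 2))
    (hint2 : Integrable (fun x => gp x * |h x|))
    (hint3 : Integrable (fun x => gp x * (h x) ^ 2))
    (G : ℝ → ℝ)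
    (hG : ∀ t : ℝ, 0 < t → G t =
      (∫ x, gp x *
          (((d : ℝ) / 2) * Real.log ((s⁻¹ + t⁻¹) / (s⁻¹ + t⁻¹ + h x)) -
            (d * t⁻¹ + ‖μ - μhat x‖ ^ 2) / (2 * (s⁻¹ + t⁻¹ + h x)))) +
        (d : ℝ) / 2 +
        (∫ x, gp x * ((d * t⁻¹ + ‖μ - x‖ ^ 2) / (2 * (s⁻¹ + t⁻¹)))) - (d : ℝ) / 2) :
    Tendsto (fun t => deriv G t) (nhdsWithin 0 (Set.Ioi (0 : ℝ)))
        (nhds (((∫ x, gp x * ‖x - μ‖ ^ 2) - ∫ x, gp x * ‖μhat x - μ‖ ^ 2) / 2)) ∧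
    (∫ x, gp x * ‖x - μ‖ ^ 2) = d * s⁻¹ := by
  have hsi : 0 < s⁻¹ := inv_pos.mpr hs
  have hgpint : Integrable gp := gp_integrable hs hgp
  have hgpmom : Integrable (fun x => gp x * ‖x - μ‖ ^ 2) := gp_moment_integrable hs hgp
  have hmom : ∫ x, gp x * ‖x - μ‖ ^ 2 = d * s⁻¹ := gp_moment hs hgp
  have hone : ∫ x, gp x = 1 := gp_integral hs hgp
  have hgpnn : ∀ x, 0 ≤ gp x := fun x => by
    rw [hgp x]; positivity
  have hgpm : Measurable gp := by
    have : gp = fun x => (2 * Real.pi * s⁻¹) ^ (-(d : ℝ) / 2)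
        * Real.exp (-‖x - μ‖ ^ 2 / (2 * s⁻¹)) := funext hgp
    rw [this]
    exact ((((measurable_id.sub_const μ).norm.pow_const 2).neg.div_const _).exp).const_mul _
  have hcm : Measurable (fun x => ‖μ - μhat x‖ ^ 2) :=
    ((measurable_const.sub hμhat).norm.pow_const 2)
  have hint1' : Integrable (fun x => gp x * ‖μ - μhat x‖ ^ 2) := by
    simpa only [norm_sub_rev] using hint1
  -- the derivative integrand
  set ψ : ℝ → EuclideanSpace ℝ (Fin d) → ℝ := fun t x =>
    ((d : ℝ) * (s⁻¹ + h x) - ‖μ - μhat x‖ ^ 2) / (2 * (1 + t * (s⁻¹ + h x)) ^ 2) -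
      (d : ℝ) * h x / (2 * (1 + t * s⁻¹) * (1 + t * (s⁻¹ + h x))) with hψ
  set Φ : ℝ → EuclideanSpace ℝ (Fin d) → ℝ := fun t x =>
    gp x * (((d : ℝ) / 2) * Real.log ((s⁻¹ + t⁻¹) / (s⁻¹ + t⁻¹ + h x)) -
      ((d : ℝ) * t⁻¹ + ‖μ - μhat x‖ ^ 2) / (2 * (s⁻¹ + t⁻¹ + h x))) with hΦ
  set B : EuclideanSpace ℝ (Fin d) → ℝ := fun x =>
    gp x * ((d : ℝ) * s⁻¹ / 2 + (d : ℝ) * |h x| + ‖μ - μhat x‖ ^ 2 / 2) with hB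
  have hBint : Integrable B := by
    have : B = fun x => ((d : ℝ) * s⁻¹ / 2) * gp x + (d : ℝ) * (gp x * |h x|)
        + (gp x * ‖μ - μhat x‖ ^ 2) / 2 := by
      funext x; rw [hB]; ring
    rw [this]
    exact ((hgpint.const_mul _).add (hint2.const_mul _)).add (hint1'.div_const 2)
  have hψm : ∀ t : ℝ, Measurable (fun x => ψ t x) := by
    intro t
    simp only [hψ]
    fun_prop
  have hψmeas : ∀ t : ℝ, AEStronglyMeasurable (fun x => gp x * ψ t x) volume := fun t =>
    (hgpm.mul (hψm t)).aestronglyMeasurable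
  have hΦm : ∀ t : ℝ, Measurable (Φ t) := by
    intro t
    simp only [hΦ]
    apply hgpm.mul
    apply Measurable.sub
    · exact (Real.measurable_log.comp
        (((measurable_const.add measurable_const).div ((measurable_const.add measurable_const).add hh)))).const_mul _
    · exact (measurable_const.add hcm).div ((measurable_const.add hh).const_mul 2)
  -- pointwise bound on the derivative integrand
  have hψbound : ∀ x, ∀ t : ℝ, 0 < t → ‖gp x * ψ t x‖ ≤ B x := by
    intro x t ht
    have hx := hpos x
    have hd1 : (1 : ℝ) ≤ 1 + t * (s⁻¹ + h x) := by nlinarith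
    have hd2 : (1 : ℝ) ≤ 1 + t * s⁻¹ := by nlinarith
    have habs : |ψ t x| ≤ (d : ℝ) * s⁻¹ / 2 + (d : ℝ) * |h x| + ‖μ - μhat x‖ ^ 2 / 2 := by
      have e1 : |((d : ℝ) * (s⁻¹ + h x) - ‖μ - μhat x‖ ^ 2) / (2 * (1 + t * (s⁻¹ + h x)) ^ 2)|
          ≤ ((d : ℝ) * s⁻¹ + (d : ℝ) * |h x| + ‖μ - μhat x‖ ^ 2) / 2 := by
        rw [abs_div]
        apply div_le_div₀ (by positivity)
        · have h1 : |(d : ℝ) * (s⁻¹ + h x) - ‖μ - μhat x‖ ^ 2|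
              ≤ |(d : ℝ) * s⁻¹| + |(d : ℝ) * h x| + |‖μ - μhat x‖ ^ 2| := by
            have : (d : ℝ) * (s⁻¹ + h x) - ‖μ - μhat x‖ ^ 2
                = (d : ℝ) * s⁻¹ + (d : ℝ) * h x + -(‖μ - μhat x‖ ^ 2) := by ring
            rw [this]
            calc |(d : ℝ) * s⁻¹ + (d : ℝ) * h x + -(‖μ - μhat x‖ ^ 2)|
                ≤ |(d : ℝ) * s⁻¹ + (d : ℝ) * h x| + |-(‖μ - μhat x‖ ^ 2)| := abs_add_le _ _
              _ ≤ |(d : ℝ) * s⁻¹| + |(d : ℝ) * h x| + |-(‖μ - μhat x‖ ^ 2)| := by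
                  gcongr; exact abs_add_le _ _
              _ = |(d : ℝ) * s⁻¹| + |(d : ℝ) * h x| + |‖μ - μhat x‖ ^ 2| := by rw [abs_neg]
          refine h1.trans (le_of_eq ?_)
          rw [abs_of_nonneg (by positivity : (0:ℝ) ≤ (d : ℝ) * s⁻¹),
            abs_of_nonneg (by positivity : (0:ℝ) ≤ ‖μ - μhat x‖ ^ 2), abs_mul]
          rw [abs_of_nonneg (by positivity : (0:ℝ) ≤ (d : ℝ))]
        · norm_num
        · rw [abs_of_nonneg (by positivity)]
          nlinarith
      have e2 : |(d : ℝ) * h x / (2 * (1 + t * s⁻¹) * (1 + t * (s⁻¹ + h x)))|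
          ≤ (d : ℝ) * |h x| / 2 := by
        rw [abs_div, abs_mul, abs_of_nonneg (by positivity : (0:ℝ) ≤ (d : ℝ))]
        apply div_le_div₀ (by positivity) le_rfl (by norm_num)
        have : |2 * (1 + t * s⁻¹) * (1 + t * (s⁻¹ + h x))|
            = 2 * (1 + t * s⁻¹) * (1 + t * (s⁻¹ + h x)) := abs_of_nonneg (by nlinarith)
        rw [this]; nlinarith
      calc |ψ t x| ≤ |((d : ℝ) * (s⁻¹ + h x) - ‖μ - μhat x‖ ^ 2) /
              (2 * (1 + t * (s⁻¹ + h x)) ^ 2)|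
            + |(d : ℝ) * h x / (2 * (1 + t * s⁻¹) * (1 + t * (s⁻¹ + h x)))| := abs_sub _ _
        _ ≤ ((d : ℝ) * s⁻¹ + (d : ℝ) * |h x| + ‖μ - μhat x‖ ^ 2) / 2
            + (d : ℝ) * |h x| / 2 := add_le_add e1 e2
        _ = (d : ℝ) * s⁻¹ / 2 + (d : ℝ) * |h x| + ‖μ - μhat x‖ ^ 2 / 2 := by ring
    rw [norm_mul, Real.norm_of_nonneg (hgpnn x), Real.norm_eq_abs, hB]
    exact mul_le_mul_of_nonneg_left habs (hgpnn x)
  -- integrability of Φ t for positive t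
  have hΦint : ∀ t : ℝ, 0 < t → Integrable (Φ t) := by
    intro t ht
    have hti : 0 < t⁻¹ := inv_pos.mpr ht
    set C1 : ℝ := ((d : ℝ) / 2) * (s⁻¹ * t + 2) + (d : ℝ) / 2 with hC1
    have hbnd : ∀ x, ‖Φ t x‖ ≤ gp x * (C1 + ((d : ℝ) / 2 * s) * |h x|
        + (t / 2) * ‖μ - μhat x‖ ^ 2) := by
      intro x
      have hx := hpos x
      have ha : 0 < s⁻¹ + t⁻¹ := by positivity
      have haH : 0 < s⁻¹ + t⁻¹ + h x := by linarith
      have hy : 0 < (s⁻¹ + t⁻¹) / (s⁻¹ + t⁻¹ + h x) := by positivity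
      -- bound on the log term
      have hlog : |Real.log ((s⁻¹ + t⁻¹) / (s⁻¹ + t⁻¹ + h x))| ≤ s⁻¹ * t + 2 + s * |h x| := by
        refine (abs_log_le hy).trans ?_
        have k1 : (s⁻¹ + t⁻¹) / (s⁻¹ + t⁻¹ + h x) ≤ (s⁻¹ + t⁻¹) * t := by
          rw [div_le_iff₀ haH]
          have h2 : (1 : ℝ) ≤ t * (s⁻¹ + t⁻¹ + h x) := by
            have : t * (s⁻¹ + t⁻¹ + h x) = 1 + t * (s⁻¹ + h x) := by field_simp; ring
            rw [this]; nlinarith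
          nlinarith
        have k2 : ((s⁻¹ + t⁻¹) / (s⁻¹ + t⁻¹ + h x))⁻¹ ≤ 1 + s * |h x| := by
          rw [inv_div]
          rw [div_le_iff₀ ha]
          have hsa : s⁻¹ ≤ s⁻¹ + t⁻¹ := by linarith
          have h3 : h x ≤ |h x| := le_abs_self _
          have h4 : s * |h x| * s⁻¹ ≤ s * |h x| * (s⁻¹ + t⁻¹) := by
            apply mul_le_mul_of_nonneg_left hsa (by positivity)
          have h5 : s * |h x| * s⁻¹ = |h x| := by field_simp
          nlinarith
        have k3 : (s⁻¹ + t⁻¹) * t = s⁻¹ * t + 1 := by field_simp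
        nlinarith
      have hfrac : |((d : ℝ) * t⁻¹ + ‖μ - μhat x‖ ^ 2) / (2 * (s⁻¹ + t⁻¹ + h x))|
          ≤ (d : ℝ) / 2 + (t / 2) * ‖μ - μhat x‖ ^ 2 := by
        rw [abs_div, abs_of_nonneg (by positivity : (0:ℝ) ≤ (d : ℝ) * t⁻¹ + ‖μ - μhat x‖ ^ 2),
          abs_of_nonneg (by positivity : (0:ℝ) ≤ 2 * (s⁻¹ + t⁻¹ + h x))]
        have hden : 2 * t⁻¹ ≤ 2 * (s⁻¹ + t⁻¹ + h x) := by nlinarith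
        have : ((d : ℝ) * t⁻¹ + ‖μ - μhat x‖ ^ 2) / (2 * (s⁻¹ + t⁻¹ + h x))
            ≤ ((d : ℝ) * t⁻¹ + ‖μ - μhat x‖ ^ 2) / (2 * t⁻¹) := by
          apply div_le_div_of_nonneg_left (by positivity) (by positivity) hden
        refine this.trans (le_of_eq ?_)
        field_simp
      rw [hΦ]
      simp only [norm_mul, Real.norm_of_nonneg (hgpnn x), Real.norm_eq_abs]
      apply mul_le_mul_of_nonneg_left _ (hgpnn x)
      calc |(d : ℝ) / 2 * Real.log ((s⁻¹ + t⁻¹) / (s⁻¹ + t⁻¹ + h x)) -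
            ((d : ℝ) * t⁻¹ + ‖μ - μhat x‖ ^ 2) / (2 * (s⁻¹ + t⁻¹ + h x))|
          ≤ |(d : ℝ) / 2 * Real.log ((s⁻¹ + t⁻¹) / (s⁻¹ + t⁻¹ + h x))|
            + |((d : ℝ) * t⁻¹ + ‖μ - μhat x‖ ^ 2) / (2 * (s⁻¹ + t⁻¹ + h x))| := abs_sub _ _
        _ ≤ (d : ℝ) / 2 * (s⁻¹ * t + 2 + s * |h x|) + ((d : ℝ) / 2 + (t / 2) * ‖μ - μhat x‖ ^ 2) := by
            apply add_le_add _ hfrac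
            rw [abs_mul, abs_of_nonneg (by positivity : (0:ℝ) ≤ (d : ℝ) / 2)]
            exact mul_le_mul_of_nonneg_left hlog (by positivity)
        _ = C1 + ((d : ℝ) / 2 * s) * |h x| + (t / 2) * ‖μ - μhat x‖ ^ 2 := by rw [hC1]; ring
    have hmaj : Integrable (fun x => gp x * (C1 + ((d : ℝ) / 2 * s) * |h x|
        + (t / 2) * ‖μ - μhat x‖ ^ 2)) := by
      have : (fun x => gp x * (C1 + ((d : ℝ) / 2 * s) * |h x|
          + (t / 2) * ‖μ - μhat x‖ ^ 2)) = fun x => C1 * gp x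
          + ((d : ℝ) / 2 * s) * (gp x * |h x|) + (t / 2) * (gp x * ‖μ - μhat x‖ ^ 2) := by
        funext x; ring
      rw [this]
      exact ((hgpint.const_mul _).add (hint2.const_mul _)).add (hint1'.const_mul _)
    refine hmaj.mono ((hΦm t).aestronglyMeasurable) (Filter.Eventually.of_forall fun x => ?_)
    refine (hbnd x).trans (le_abs_self _)
  -- differentiation under the integral sign
  have hderiv : ∀ t₀ : ℝ, 0 < t₀ →
      HasDerivAt (fun t => ∫ x, Φ t x) (∫ x, gp x * ψ t₀ x) t₀ := by
    intro t₀ ht₀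
    have key := hasDerivAt_integral_of_dominated_loc_of_deriv_le (F := Φ)
      (F' := fun t x => gp x * ψ t x) (x₀ := t₀) (s := Metric.ball t₀ (t₀ / 2)) (bound := B)
      (Metric.ball_mem_nhds _ (by linarith))
      (Filter.Eventually.of_forall fun t => (hΦm t).aestronglyMeasurable)
      (hΦint t₀ ht₀) (hψmeas t₀)
      (Filter.Eventually.of_forall fun x => fun t htb => ?_) hBint
      (Filter.Eventually.of_forall fun x => fun t htb => ?_)
    · exact key.2
    · have ht : 0 < t := by
        have := abs_lt.mp (Metric.mem_ball.mp htb)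
        linarith [this.1]
      exact hψbound x t ht
    · have ht : 0 < t := by
        have := abs_lt.mp (Metric.mem_ball.mp htb)
        linarith [this.1]
      simp only [hΦ, hψ]
      exact (phi_hasDerivAt d (‖μ - μhat x‖ ^ 2) hs ht (hpos x)).const_mul (gp x)
  -- the second integral in the definition of G is constantly d/2
  have hGloc : ∀ t : ℝ, 0 < t → G t = (∫ x, Φ t x) + (d : ℝ) / 2 := by
    intro t ht
    have hti : 0 < t⁻¹ := inv_pos.mpr ht
    have ha : 0 < s⁻¹ + t⁻¹ := by positivity
    have hJ : (∫ x, gp x * (((d : ℝ) * t⁻¹ + ‖μ - x‖ ^ 2) / (2 * (s⁻¹ + t⁻¹))))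
        = (d : ℝ) / 2 := by
      have e : (fun x : EuclideanSpace ℝ (Fin d) =>
          gp x * (((d : ℝ) * t⁻¹ + ‖μ - x‖ ^ 2) / (2 * (s⁻¹ + t⁻¹))))
          = fun x => (2 * (s⁻¹ + t⁻¹))⁻¹ * (((d : ℝ) * t⁻¹) * gp x + gp x * ‖x - μ‖ ^ 2) := by
        funext x
        rw [norm_sub_rev μ x]
        ring
      rw [e, integral_const_mul, integral_add ((hgpint.const_mul _)) hgpmom,
        integral_const_mul, hone, hmom]
      rw [inv_mul_eq_div, div_eq_iff (by positivity : (2 : ℝ) * (s⁻¹ + t⁻¹) ≠ 0)]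
      field_simp
      ring
    rw [hG t ht, hJ, hΦ]
    ring
  -- deriv G is the integral of the derivative
  have hderivG : ∀ t : ℝ, 0 < t → deriv G t = ∫ x, gp x * ψ t x := by
    intro t ht
    have hEq : G =ᶠ[nhds t] fun u => (∫ x, Φ u x) + (d : ℝ) / 2 := by
      filter_upwards [IsOpen.mem_nhds isOpen_Ioi ht] with u hu
      exact hGloc u hu
    rw [Filter.EventuallyEq.deriv_eq hEq]
    exact (((hderiv t ht).add_const _)).deriv
  -- limit of the derivative as t → 0⁺, by dominated convergence
  have hlim : Tendsto (fun t => ∫ x, gp x * ψ t x) (nhdsWithin 0 (Set.Ioi (0 : ℝ)))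
      (nhds (∫ x, gp x * ψ 0 x)) := by
    apply tendsto_integral_filter_of_dominated_convergence B
    · exact Filter.Eventually.of_forall fun t => hψmeas t
    · filter_upwards [self_mem_nhdsWithin] with t ht
      exact Filter.Eventually.of_forall fun x => hψbound x t ht
    · exact hBint
    · refine Filter.Eventually.of_forall fun x => ?_
      have hx := hpos x
      have hc1 : ContinuousAt (fun t : ℝ =>
          ((d : ℝ) * (s⁻¹ + h x) - ‖μ - μhat x‖ ^ 2) / (2 * (1 + t * (s⁻¹ + h x)) ^ 2)) 0 := by
        apply ContinuousAt.div continuousAt_const (by fun_prop)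
        norm_num
      have hc2 : ContinuousAt (fun t : ℝ =>
          (d : ℝ) * h x / (2 * (1 + t * s⁻¹) * (1 + t * (s⁻¹ + h x)))) 0 := by
        apply ContinuousAt.div continuousAt_const (by fun_prop)
        norm_num
      have hcont : ContinuousAt (fun t : ℝ => gp x * ψ t x) 0 := by
        simp only [hψ]
        exact continuousAt_const.mul (hc1.sub hc2)
      exact hcont.tendsto.mono_left nhdsWithin_le_nhds
  -- value of the limit
  have hval : ∫ x, gp x * ψ 0 x
      = ((∫ x, gp x * ‖x - μ‖ ^ 2) - ∫ x, gp x * ‖μhat x - μ‖ ^ 2) / 2 := by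
    have e : (fun x => gp x * ψ 0 x)
        = fun x => ((d : ℝ) * s⁻¹ / 2) * gp x - (gp x * ‖μ - μhat x‖ ^ 2) / 2 := by
      funext x
      simp only [hψ]
      norm_num
      ring
    rw [e, integral_sub ((hgpint.const_mul _)) (hint1'.div_const 2), integral_const_mul,
      integral_div, hone, hmom]
    have : (∫ x, gp x * ‖μ - μhat x‖ ^ 2) = ∫ x, gp x * ‖μhat x - μ‖ ^ 2 := by
      simp only [norm_sub_rev]
    rw [this]
    ring
  constructor
  · rw [← hval]
    refine Tendsto.congr' ?_ hlim
    filter_upwards [self_mem_nhdsWithin] with t ht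
    exact (hderivG t ht).symm
  · exact hmom
end

section
/- Fix s > 0, μ ∈ ℝ^d, measurable μ̂ : ℝ^d → ℝ^d, and a measurable symmetric-matrix-valued H : ℝ^d → ℝ^{d×d} such that A(x) = s^{-1}I_d + H(x) is positive definite, with suitable integrability. Define Σ̂_t(x) = t^{-1}I_d + A(x) for t > 0 and the risk difference G(t) = E_x[-(1/2) log(det Σ̂_t(x)/(s^{-1}+t^{-1})^d) - (1/2)(t^{-1} tr Σ̂_t(x)^{-1} + (μ - μ̂(x))^⊤ Σ̂_t(x)^{-1} (μ - μ̂(x)))] + d/2 + E_x[(d t^{-1} + ‖μ - x‖²)/(2(s^{-1}+t^{-1}))] - d/2, where x ~ N_d(μ, s^{-1}I_d). Then lim_{t→0} G'(t) = (d s^{-1} - E_x[‖μ̂(x) - μ‖²])/2. -/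
open MeasureTheory Filter Matrix Real
namespace IRM


lemma integrable_gauss (d : ℕ) {b : ℝ} (hb : 0 < b) :
    Integrable (fun v : EuclideanSpace ℝ (Fin d) => Real.exp (-b * ‖v‖ ^ 2)) := by
  have h := GaussianFourier.integrable_cexp_neg_mul_sq_norm_add
    (V := EuclideanSpace ℝ (Fin d)) (b := (b : ℂ)) (by simpa using hb) 0 0
  have h2 := h.re
  refine h2.congr (Filter.Eventually.of_forall fun v => ?_)
  simp only [zero_mul, add_zero, Complex.ofReal_pow]
  rw [show (-(b : ℂ) * (‖v‖ : ℂ) ^ 2) = ((-b * ‖v‖ ^ 2 : ℝ) : ℂ) by push_cast; ring]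
  exact Complex.exp_ofReal_re _

lemma integrable_sq_gauss (d : ℕ) {b : ℝ} (hb : 0 < b) :
    Integrable (fun v : EuclideanSpace ℝ (Fin d) => ‖v‖ ^ 2 * Real.exp (-b * ‖v‖ ^ 2)) := by
  have hmeas : AEStronglyMeasurable
      (fun v : EuclideanSpace ℝ (Fin d) => ‖v‖ ^ 2 * Real.exp (-b * ‖v‖ ^ 2)) volume := by
    apply Continuous.aestronglyMeasurable; fun_prop
  refine (((integrable_gauss d (by positivity : (0:ℝ) < b/2)).const_mul (2/b)).mono hmeas
    (Filter.Eventually.of_forall fun v => ?_))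
  have h0 : (0:ℝ) ≤ ‖v‖ ^ 2 := by positivity
  have key : ‖v‖ ^ 2 * Real.exp (-(b/2) * ‖v‖ ^ 2) ≤ 2 / b := by
    have h1 : (b/2) * ‖v‖ ^ 2 ≤ Real.exp ((b/2) * ‖v‖ ^ 2) := by
      have := Real.add_one_le_exp ((b/2) * ‖v‖ ^ 2)
      nlinarith [mul_nonneg (le_of_lt (by positivity : (0:ℝ) < b/2)) h0]
    have h2 : ‖v‖ ^ 2 ≤ (2/b) * Real.exp ((b/2) * ‖v‖ ^ 2) := by
      rw [div_mul_eq_mul_div, le_div_iff₀ hb]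
      calc ‖v‖ ^ 2 * b = 2 * ((b/2) * ‖v‖^2) := by ring
        _ ≤ 2 * Real.exp ((b/2) * ‖v‖ ^ 2) := by linarith
        _ = 2 * Real.exp ((b/2) * ‖v‖ ^ 2) := rfl
    calc ‖v‖ ^ 2 * Real.exp (-(b/2) * ‖v‖ ^ 2)
        ≤ ((2/b) * Real.exp ((b/2) * ‖v‖ ^ 2)) * Real.exp (-(b/2) * ‖v‖ ^ 2) := by
          apply mul_le_mul_of_nonneg_right h2 (Real.exp_nonneg _)
      _ = 2 / b := by rw [mul_assoc, ← Real.exp_add]; ring_nf; simp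
  have hsplit : ‖v‖ ^ 2 * Real.exp (-b * ‖v‖ ^ 2)
      = (‖v‖ ^ 2 * Real.exp (-(b/2) * ‖v‖ ^ 2)) * Real.exp (-(b/2) * ‖v‖ ^ 2) := by
    rw [mul_assoc, ← Real.exp_add]; ring_nf
  rw [Real.norm_eq_abs, abs_of_nonneg (by positivity), Real.norm_eq_abs, abs_of_nonneg (by positivity),
    hsplit]
  exact mul_le_mul_of_nonneg_right key (Real.exp_nonneg _)

lemma gauss_moment (d : ℕ) {b : ℝ} (hb : 0 < b) :
    ∫ v : EuclideanSpace ℝ (Fin d), ‖v‖ ^ 2 * Real.exp (-b * ‖v‖ ^ 2)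
      = (d / (2 * b)) * ∫ v : EuclideanSpace ℝ (Fin d), Real.exp (-b * ‖v‖ ^ 2) := by
  set K : ℝ → ℝ := fun r => ∫ v : EuclideanSpace ℝ (Fin d), Real.exp (-r * ‖v‖ ^ 2) with hK
  have hder : HasDerivAt K
      (∫ v : EuclideanSpace ℝ (Fin d), -(‖v‖ ^ 2 * Real.exp (-b * ‖v‖ ^ 2))) b := by
    have := hasDerivAt_integral_of_dominated_loc_of_deriv_le (μ := volume)
      (F := fun r (v : EuclideanSpace ℝ (Fin d)) => Real.exp (-r * ‖v‖ ^ 2))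
      (F' := fun r (v : EuclideanSpace ℝ (Fin d)) => -(‖v‖ ^ 2 * Real.exp (-r * ‖v‖ ^ 2)))
      (x₀ := b) (bound := fun v => ‖v‖ ^ 2 * Real.exp (-(b/2) * ‖v‖ ^ 2))
      (Metric.ball_mem_nhds b (by positivity : (0:ℝ) < b/2))
      (Filter.Eventually.of_forall fun r => (by fun_prop : Continuous fun v : EuclideanSpace ℝ (Fin d) => Real.exp (-r * ‖v‖ ^ 2)).aestronglyMeasurable)
      (integrable_gauss d hb)
      ((by fun_prop : Continuous fun v : EuclideanSpace ℝ (Fin d) => -(‖v‖ ^ 2 * Real.exp (-b * ‖v‖ ^ 2))).aestronglyMeasurable)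
      (Filter.Eventually.of_forall fun v => fun r hr => ?_)
      (integrable_sq_gauss d (by positivity : (0:ℝ) < b/2))
      (Filter.Eventually.of_forall fun v => fun r hr => ?_)
    · exact this.2
    · have hrb : b/2 ≤ r := by
        have := Metric.mem_ball.mp hr
        have := abs_lt.mp (by simpa [Real.dist_eq] using this)
        linarith [this.1]
      have h0 : (0:ℝ) ≤ ‖v‖ ^ 2 := by positivity
      rw [norm_neg, Real.norm_eq_abs, abs_of_nonneg (by positivity)]
      apply mul_le_mul_of_nonneg_left _ h0
      apply Real.exp_le_exp.mpr
      nlinarith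
    · have : HasDerivAt (fun r : ℝ => -r * ‖v‖ ^ 2) (-‖v‖ ^ 2) r := by
        simpa using ((hasDerivAt_id r).neg.mul_const (‖v‖ ^ 2))
      have := this.exp
      exact this.congr_deriv (by ring)
  have hformula : K =ᶠ[nhds b] fun r => (Real.pi / r) ^ ((d : ℝ) / 2) := by
    filter_upwards [Ioi_mem_nhds hb] with r hr
    rw [hK]
    simp only
    rw [GaussianFourier.integral_rexp_neg_mul_sq_norm (V := EuclideanSpace ℝ (Fin d)) hr]
    congr 1
    simp [finrank_euclideanSpace_fin]
  have hder2 : HasDerivAt K (-((d : ℝ) / (2 * b)) * (Real.pi / b) ^ ((d : ℝ) / 2)) b := by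
    have hpos : 0 < Real.pi / b := by positivity
    have hr : HasDerivAt (fun r : ℝ => Real.pi / r) (-(Real.pi / b ^ 2)) b := by
      simpa [div_eq_mul_inv, mul_comm, neg_div] using ((hasDerivAt_inv hb.ne').const_mul Real.pi)
    have hp : HasDerivAt (fun y : ℝ => y ^ ((d : ℝ) / 2))
        (((d : ℝ)/2) * (Real.pi / b) ^ ((d : ℝ)/2 - 1)) (Real.pi / b) :=
      Real.hasDerivAt_rpow_const (Or.inl hpos.ne')
    have := hp.comp b hr
    have heq : ((d : ℝ)/2) * (Real.pi / b) ^ ((d : ℝ)/2 - 1) * (-(Real.pi / b ^ 2))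
        = -((d : ℝ) / (2 * b)) * (Real.pi / b) ^ ((d : ℝ) / 2) := by
      rw [Real.rpow_sub hpos, Real.rpow_one]
      field_simp
    rw [heq] at this
    have this' : HasDerivAt (fun r : ℝ => (Real.pi / r) ^ ((d : ℝ) / 2))
        (-((d : ℝ) / (2 * b)) * (Real.pi / b) ^ ((d : ℝ) / 2)) b := this
    exact this'.congr_of_eventuallyEq hformula
  have huniq := hder.unique hder2
  rw [integral_neg] at huniq
  have : ∫ v : EuclideanSpace ℝ (Fin d), ‖v‖ ^ 2 * Real.exp (-b * ‖v‖ ^ 2)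
      = ((d : ℝ) / (2 * b)) * (Real.pi / b) ^ ((d : ℝ) / 2) := by
    have := congrArg Neg.neg huniq
    simp only [neg_neg] at this
    rw [this]; ring
  rw [this]
  congr 1
  have := hformula.self_of_nhds
  rw [hK] at this
  simp only at this
  rw [this]


section PhiM
variable {d : ℕ}

noncomputable def PhiM (U : Matrix (Fin d) (Fin d) ℝ) (lam : Fin d → ℝ) (f : ℝ → ℝ) :
    Matrix (Fin d) (Fin d) ℝ :=
  U * diagonal (f ∘ lam) * star U

variable {U : Matrix (Fin d) (Fin d) ℝ} {lam : Fin d → ℝ}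

lemma star_eq_transpose (M : Matrix (Fin d) (Fin d) ℝ) : star M = M.transpose := by
  rw [Matrix.star_eq_conjTranspose]
  ext i j
  rw [Matrix.conjTranspose_apply, Matrix.transpose_apply]
  rfl

lemma PhiM_congr {f g : ℝ → ℝ} (h : ∀ k, f (lam k) = g (lam k)) :
    PhiM U lam f = PhiM U lam g := by
  have : f ∘ lam = g ∘ lam := funext h
  rw [PhiM, PhiM, this]

lemma PhiM_mul (hU2 : star U * U = 1) (f g : ℝ → ℝ) :
    PhiM U lam f * PhiM U lam g = PhiM U lam (fun y => f y * g y) := by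
  show U * diagonal (f ∘ lam) * star U * (U * diagonal (g ∘ lam) * star U)
      = U * diagonal ((fun y => f y * g y) ∘ lam) * star U
  calc U * diagonal (f ∘ lam) * star U * (U * diagonal (g ∘ lam) * star U)
      = U * diagonal (f ∘ lam) * (star U * U) * diagonal (g ∘ lam) * star U := by
        simp only [mul_assoc]
    _ = U * (diagonal (f ∘ lam) * diagonal (g ∘ lam)) * star U := by
        rw [hU2, mul_one]; simp only [mul_assoc]
    _ = U * diagonal ((fun y => f y * g y) ∘ lam) * star U := by
        rw [diagonal_mul_diagonal]; rfl

lemma PhiM_add (f g : ℝ → ℝ) : PhiM U lam f + PhiM U lam g = PhiM U lam (fun y => f y + g y) := by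
  unfold PhiM
  rw [← add_mul, ← mul_add, diagonal_add]
  rfl

lemma PhiM_smul (c : ℝ) (f : ℝ → ℝ) : c • PhiM U lam f = PhiM U lam (fun y => c * f y) := by
  unfold PhiM
  rw [show ((fun y => c * f y) ∘ lam) = c • (f ∘ lam) from rfl,
    diagonal_smul, Matrix.mul_smul, Matrix.smul_mul]

lemma PhiM_const (hU1 : U * star U = 1) (c : ℝ) :
    PhiM U lam (fun _ => c) = c • (1 : Matrix (Fin d) (Fin d) ℝ) := by
  have h1 : diagonal ((fun _ => c) ∘ lam) = c • (1 : Matrix (Fin d) (Fin d) ℝ) := by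
    ext i j
    simp only [diagonal_apply, Matrix.smul_apply, Matrix.one_apply, Function.comp_apply,
      smul_eq_mul]
    split <;> simp
  unfold PhiM
  rw [h1, Matrix.mul_smul, Matrix.smul_mul, mul_one, hU1]

lemma PhiM_one (hU1 : U * star U = 1) : PhiM U lam (fun _ => (1:ℝ)) = 1 := by
  rw [PhiM_const hU1]; simp

lemma PhiM_sub (f g : ℝ → ℝ) : PhiM U lam f - PhiM U lam g = PhiM U lam (fun y => f y - g y) := by
  have h1 := PhiM_add (U := U) (lam := lam) g (fun y => f y - g y)
  have h2 : PhiM U lam (fun y => g y + (f y - g y)) = PhiM U lam f := by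
    apply PhiM_congr; intro k; ring
  rw [h2] at h1
  linear_combination (norm := abel) h1.symm

lemma PhiM_trace (hU2 : star U * U = 1) (f : ℝ → ℝ) :
    (PhiM U lam f).trace = ∑ k, f (lam k) := by
  unfold PhiM
  rw [Matrix.trace_mul_cycle, star_eq_transpose, ← star_eq_transpose, hU2, one_mul,
    trace_diagonal]
  rfl

lemma PhiM_det (hU1 : U * star U = 1) (f : ℝ → ℝ) :
    (PhiM U lam f).det = ∏ k, f (lam k) := by
  unfold PhiM
  rw [Matrix.det_mul_right_comm, hU1, one_mul, det_diagonal]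
  rfl

lemma PhiM_inv (hU1 : U * star U = 1) (hU2 : star U * U = 1) (f : ℝ → ℝ)
    (h : ∀ k, f (lam k) ≠ 0) :
    (PhiM U lam f)⁻¹ = PhiM U lam (fun y => (f y)⁻¹) := by
  apply Matrix.inv_eq_right_inv
  rw [PhiM_mul hU2, ← PhiM_one (lam := lam) hU1]
  exact PhiM_congr fun k => by rw [mul_inv_cancel₀ (h k)]

lemma PhiM_quad (f : ℝ → ℝ) (v : Fin d → ℝ) :
    v ⬝ᵥ (PhiM U lam f) *ᵥ v = ∑ k, f (lam k) * ((star U *ᵥ v) k) ^ 2 := by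
  set w : Fin d → ℝ := star U *ᵥ v with hw
  have h1 : (PhiM U lam f) *ᵥ v = U *ᵥ (diagonal (f ∘ lam) *ᵥ w) := by
    unfold PhiM
    rw [← mulVec_mulVec, ← mulVec_mulVec, hw]
  rw [h1]
  have h2 : v ⬝ᵥ (U *ᵥ (diagonal (f ∘ lam) *ᵥ w)) = w ⬝ᵥ (diagonal (f ∘ lam) *ᵥ w) := by
    rw [Matrix.dotProduct_mulVec v U, hw, star_eq_transpose, Matrix.mulVec_transpose]
  rw [h2]
  unfold dotProduct
  apply Finset.sum_congr rfl
  intro k _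
  rw [Matrix.mulVec_diagonal]
  show w k * (f (lam k) * w k) = _
  ring

lemma sum_w_sq (hU1 : U * star U = 1) (v : Fin d → ℝ) :
    ∑ k, ((star U *ᵥ v) k) ^ 2 = v ⬝ᵥ v := by
  set w : Fin d → ℝ := star U *ᵥ v with hw
  have h0 : ∑ k, (w k) ^ 2 = w ⬝ᵥ w := by
    unfold dotProduct; apply Finset.sum_congr rfl; intro k _; ring
  have hUt : U * U.transpose = 1 := by rw [← star_eq_transpose]; exact hU1
  rw [h0, hw, star_eq_transpose, Matrix.dotProduct_mulVec, Matrix.vecMul_transpose,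
    Matrix.mulVec_mulVec, hUt, Matrix.one_mulVec]

end PhiM

section Main
variable {d : ℕ} {A : Matrix (Fin d) (Fin d) ℝ}

/-- the integrand bracket -/
noncomputable def fFun (d : ℕ) (s : ℝ) (A : Matrix (Fin d) (Fin d) ℝ) (v : Fin d → ℝ)
    (t : ℝ) : ℝ :=
  -(1 / 2) * Real.log ((t⁻¹ • (1 : Matrix (Fin d) (Fin d) ℝ) + A).det / (s⁻¹ + t⁻¹) ^ d) -
    1 / 2 * (t⁻¹ * ((t⁻¹ • (1 : Matrix (Fin d) (Fin d) ℝ) + A)⁻¹).trace +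
      v ⬝ᵥ ((t⁻¹ • (1 : Matrix (Fin d) (Fin d) ℝ) + A)⁻¹ *ᵥ v))

/-- the derivative of the integrand bracket -/
noncomputable def DFun (d : ℕ) (s : ℝ) (A : Matrix (Fin d) (Fin d) ℝ) (v : Fin d → ℝ)
    (t : ℝ) : ℝ :=
  1 / 2 * ((1 + t * s⁻¹)⁻¹ *
      (((1 + t • A)⁻¹ * (s⁻¹ • (1 : Matrix (Fin d) (Fin d) ℝ) - A)).trace) +
    ((1 + t • A)⁻¹ * ((1 + t • A)⁻¹ * A)).trace -
    v ⬝ᵥ (((1 + t • A)⁻¹ * (1 + t • A)⁻¹) *ᵥ v))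

lemma A_eq_PhiM (hA : A.IsHermitian) :
    A = PhiM (hA.eigenvectorUnitary : Matrix (Fin d) (Fin d) ℝ) hA.eigenvalues id := by
  rw [PhiM]
  conv_lhs => rw [hA.spectral_theorem, Unitary.conjStarAlgAut_apply]
  rfl

lemma hU1' (hA : A.IsHermitian) : (hA.eigenvectorUnitary : Matrix (Fin d) (Fin d) ℝ) *
    star (hA.eigenvectorUnitary : Matrix (Fin d) (Fin d) ℝ) = 1 :=
  (Matrix.mem_unitaryGroup_iff).mp hA.eigenvectorUnitary.2

lemma hU2' (hA : A.IsHermitian) : star (hA.eigenvectorUnitary : Matrix (Fin d) (Fin d) ℝ) *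
    (hA.eigenvectorUnitary : Matrix (Fin d) (Fin d) ℝ) = 1 :=
  (Matrix.mem_unitaryGroup_iff').mp hA.eigenvectorUnitary.2

lemma fFun_eq (hA : A.IsHermitian) (hlam : ∀ k, 0 < hA.eigenvalues k) (s : ℝ) (hs : 0 < s)
    (v : Fin d → ℝ) {t : ℝ} (ht : 0 < t) :
    fFun d s A v t =
      (∑ k, (-(1 / 2) * Real.log (t⁻¹ + hA.eigenvalues k) -
        1 / 2 * (t⁻¹ * (t⁻¹ + hA.eigenvalues k)⁻¹) -
        1 / 2 * (((star (hA.eigenvectorUnitary : Matrix (Fin d) (Fin d) ℝ) *ᵥ v) k) ^ 2 *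
          (t⁻¹ + hA.eigenvalues k)⁻¹))) +
      (d : ℝ) / 2 * Real.log (s⁻¹ + t⁻¹) := by
  set U : Matrix (Fin d) (Fin d) ℝ := (hA.eigenvectorUnitary : Matrix (Fin d) (Fin d) ℝ)
  set lam := hA.eigenvalues
  have hU1 : U * star U = 1 := hU1' hA
  have hU2 : star U * U = 1 := hU2' hA
  have ht1 : 0 < t⁻¹ := by positivity
  have hs1 : 0 < s⁻¹ := by positivity
  have hst : 0 < s⁻¹ + t⁻¹ := by positivity
  have hck : ∀ k, 0 < t⁻¹ + lam k := fun k => by have := hlam k; positivity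
  have hM : t⁻¹ • (1 : Matrix (Fin d) (Fin d) ℝ) + A = PhiM U lam (fun y => t⁻¹ + y) := by
    rw [A_eq_PhiM hA]
    have h1 := PhiM_add (U := U) (lam := lam) (fun _ => t⁻¹) id
    rw [PhiM_const hU1] at h1
    exact h1
  have hdet : (t⁻¹ • (1 : Matrix (Fin d) (Fin d) ℝ) + A).det = ∏ k, (t⁻¹ + lam k) := by
    rw [hM, PhiM_det hU1]
  have hMinv : (t⁻¹ • (1 : Matrix (Fin d) (Fin d) ℝ) + A)⁻¹ = PhiM U lam (fun y => (t⁻¹ + y)⁻¹) := by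
    rw [hM, PhiM_inv hU1 hU2 _ (fun k => (hck k).ne')]
  have htr : ((t⁻¹ • (1 : Matrix (Fin d) (Fin d) ℝ) + A)⁻¹).trace = ∑ k, (t⁻¹ + lam k)⁻¹ := by
    rw [hMinv, PhiM_trace hU2]
  have hquad : v ⬝ᵥ ((t⁻¹ • (1 : Matrix (Fin d) (Fin d) ℝ) + A)⁻¹ *ᵥ v)
      = ∑ k, (t⁻¹ + lam k)⁻¹ * ((star U *ᵥ v) k) ^ 2 := by
    rw [hMinv, PhiM_quad]
  have hlog : Real.log ((∏ k, (t⁻¹ + lam k)) / (s⁻¹ + t⁻¹) ^ d)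
      = (∑ k, Real.log (t⁻¹ + lam k)) - (d : ℝ) * Real.log (s⁻¹ + t⁻¹) := by
    rw [Real.log_div (Finset.prod_pos (fun k _ => hck k)).ne' (by positivity),
      Real.log_prod (fun k _ => (hck k).ne'), Real.log_pow]
  unfold fFun
  rw [hdet, htr, hquad, hlog]
  rw [Finset.sum_sub_distrib, Finset.sum_sub_distrib, ← Finset.mul_sum, ← Finset.mul_sum,
    ← Finset.mul_sum]
  have hc : ∑ k, (t⁻¹ + lam k)⁻¹ * ((star U *ᵥ v) k) ^ 2
      = ∑ k, ((star U *ᵥ v) k) ^ 2 * (t⁻¹ + lam k)⁻¹ :=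
    Finset.sum_congr rfl fun k _ => mul_comm _ _
  rw [hc]
  rw [show (∑ k, 1 / 2 * (((star U *ᵥ v) k) ^ 2 * (t⁻¹ + lam k)⁻¹))
      = 1 / 2 * ∑ k, ((star U *ᵥ v) k) ^ 2 * (t⁻¹ + lam k)⁻¹ from (Finset.mul_sum _ _ _).symm]
  ring

lemma DFun_eq (hA : A.IsHermitian) (hlam : ∀ k, 0 < hA.eigenvalues k) (s : ℝ)
    (v : Fin d → ℝ) {t : ℝ} (ht : 0 ≤ t) :
    DFun d s A v t =
      ∑ k, (1 / 2 * ((1 + t * s⁻¹)⁻¹ *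
          ((1 + t * hA.eigenvalues k)⁻¹ * (s⁻¹ - hA.eigenvalues k)) +
        (1 + t * hA.eigenvalues k)⁻¹ * ((1 + t * hA.eigenvalues k)⁻¹ * hA.eigenvalues k) -
        ((1 + t * hA.eigenvalues k)⁻¹ * (1 + t * hA.eigenvalues k)⁻¹) *
          ((star (hA.eigenvectorUnitary : Matrix (Fin d) (Fin d) ℝ) *ᵥ v) k) ^ 2)) := by
  set U : Matrix (Fin d) (Fin d) ℝ := (hA.eigenvectorUnitary : Matrix (Fin d) (Fin d) ℝ)
  set lam := hA.eigenvalues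
  have hU1 : U * star U = 1 := hU1' hA
  have hU2 : star U * U = 1 := hU2' hA
  have hck : ∀ k, (1 + t * lam k) ≠ 0 := fun k => by nlinarith [mul_nonneg ht (hlam k).le]
  have hone : (1 : Matrix (Fin d) (Fin d) ℝ) + t • A = PhiM U lam (fun y => 1 + t * y) := by
    rw [A_eq_PhiM hA]
    rw [PhiM_smul]
    have h1 := PhiM_add (U := U) (lam := lam) (fun _ => (1:ℝ)) (fun y => t * id y)
    rw [PhiM_one hU1] at h1
    exact h1
  have hC : ((1 : Matrix (Fin d) (Fin d) ℝ) + t • A)⁻¹ = PhiM U lam (fun y => (1 + t * y)⁻¹) := by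
    rw [hone, PhiM_inv hU1 hU2 (fun y => 1 + t * y) hck]
  have hsub : s⁻¹ • (1 : Matrix (Fin d) (Fin d) ℝ) - A = PhiM U lam (fun y => s⁻¹ - y) := by
    rw [A_eq_PhiM hA]
    have h1 := PhiM_sub (U := U) (lam := lam) (fun _ => s⁻¹) id
    rw [PhiM_const hU1] at h1
    exact h1
  have h1 : (((1 : Matrix (Fin d) (Fin d) ℝ) + t • A)⁻¹ *
      (s⁻¹ • (1 : Matrix (Fin d) (Fin d) ℝ) - A)).trace
      = ∑ k, (1 + t * lam k)⁻¹ * (s⁻¹ - lam k) := by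
    rw [hC, hsub, PhiM_mul hU2, PhiM_trace hU2]
  have h2 : (((1 : Matrix (Fin d) (Fin d) ℝ) + t • A)⁻¹ *
      (((1 : Matrix (Fin d) (Fin d) ℝ) + t • A)⁻¹ * A)).trace
      = ∑ k, (1 + t * lam k)⁻¹ * ((1 + t * lam k)⁻¹ * lam k) := by
    rw [hC, A_eq_PhiM hA, PhiM_mul hU2, PhiM_mul hU2, PhiM_trace hU2]
    simp only [id_eq]
  have h3 : v ⬝ᵥ ((((1 : Matrix (Fin d) (Fin d) ℝ) + t • A)⁻¹ *
      ((1 : Matrix (Fin d) (Fin d) ℝ) + t • A)⁻¹) *ᵥ v)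
      = ∑ k, ((1 + t * lam k)⁻¹ * (1 + t * lam k)⁻¹) * ((star U *ᵥ v) k) ^ 2 := by
    rw [hC, PhiM_mul hU2, PhiM_quad]
  unfold DFun
  rw [h1, h2, h3]
  rw [show (∑ k, (1 / 2 * ((1 + t * s⁻¹)⁻¹ * ((1 + t * lam k)⁻¹ * (s⁻¹ - lam k)) +
      (1 + t * lam k)⁻¹ * ((1 + t * lam k)⁻¹ * lam k) -
      ((1 + t * lam k)⁻¹ * (1 + t * lam k)⁻¹) * ((star U *ᵥ v) k) ^ 2)))
      = 1 / 2 * ∑ k, ((1 + t * s⁻¹)⁻¹ * ((1 + t * lam k)⁻¹ * (s⁻¹ - lam k)) +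
      (1 + t * lam k)⁻¹ * ((1 + t * lam k)⁻¹ * lam k) -
      ((1 + t * lam k)⁻¹ * (1 + t * lam k)⁻¹) * ((star U *ᵥ v) k) ^ 2)
      from (Finset.mul_sum _ _ _).symm]
  rw [Finset.sum_sub_distrib, Finset.sum_add_distrib, ← Finset.mul_sum]

lemma trace_eq_sum_eigs (hA : A.IsHermitian) : A.trace = ∑ k, hA.eigenvalues k := by
  set U : Matrix (Fin d) (Fin d) ℝ := (hA.eigenvectorUnitary : Matrix (Fin d) (Fin d) ℝ)
  set lam := hA.eigenvalues
  have hU2 : star U * U = 1 := hU2' hA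
  have h : A = PhiM U lam id := A_eq_PhiM hA
  rw [h, PhiM_trace hU2]
  simp only [id_eq]

lemma DFun_zero (hA : A.IsHermitian) (hlam : ∀ k, 0 < hA.eigenvalues k) (s : ℝ)
    (v : Fin d → ℝ) :
    DFun d s A v 0 = ((d : ℝ) * s⁻¹ - v ⬝ᵥ v) / 2 := by
  have h1 : DFun d s A v 0 = ∑ k, (s⁻¹ / 2 -
      ((star (hA.eigenvectorUnitary : Matrix (Fin d) (Fin d) ℝ) *ᵥ v) k) ^ 2 / 2) := by
    rw [DFun_eq hA hlam s v le_rfl]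
    apply Finset.sum_congr rfl
    intro k _
    norm_num
    ring
  rw [h1, Finset.sum_sub_distrib, ← Finset.sum_div, ← Finset.sum_div, sum_w_sq (hU1' hA) v,
    Finset.sum_const,
    Finset.card_univ, Fintype.card_fin, nsmul_eq_mul]
  ring

lemma DFun_bound (hA : A.IsHermitian) (hlam : ∀ k, 0 < hA.eigenvalues k) {s : ℝ} (hs : 0 < s)
    (v : Fin d → ℝ) {t : ℝ} (ht : 0 ≤ t) :
    |DFun d s A v t| ≤ (d : ℝ) * s⁻¹ / 2 + A.trace + (v ⬝ᵥ v) / 2 := by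
  have hs1 : 0 < s⁻¹ := by positivity
  rw [DFun_eq hA hlam s v ht, trace_eq_sum_eigs hA,
    show (v ⬝ᵥ v) = ∑ k, ((star (hA.eigenvectorUnitary : Matrix (Fin d) (Fin d) ℝ) *ᵥ v) k) ^ 2
      from (sum_w_sq (hU1' hA) v).symm]
  set w : Fin d → ℝ := star (hA.eigenvectorUnitary : Matrix (Fin d) (Fin d) ℝ) *ᵥ v
  set lam := hA.eigenvalues
  calc |∑ k, (1 / 2 * ((1 + t * s⁻¹)⁻¹ * ((1 + t * lam k)⁻¹ * (s⁻¹ - lam k)) +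
        (1 + t * lam k)⁻¹ * ((1 + t * lam k)⁻¹ * lam k) -
        ((1 + t * lam k)⁻¹ * (1 + t * lam k)⁻¹) * (w k) ^ 2))|
      ≤ ∑ k, ((s⁻¹ + lam k) / 2 + lam k / 2 + (w k) ^ 2 / 2) := by
        refine (Finset.abs_sum_le_sum_abs _ _).trans (Finset.sum_le_sum fun k _ => ?_)
        have hl := hlam k
        have h1 : 0 < 1 + t * s⁻¹ := by nlinarith [mul_nonneg ht hs1.le]
        have h2 : 0 < 1 + t * lam k := by nlinarith [mul_nonneg ht hl.le]
        have hi1 : (1 + t * s⁻¹)⁻¹ ≤ 1 := by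
          rw [inv_le_one_iff₀]; right; nlinarith [mul_nonneg ht hs1.le]
        have hi2 : (1 + t * lam k)⁻¹ ≤ 1 := by
          rw [inv_le_one_iff₀]; right; nlinarith [mul_nonneg ht hl.le]
        have hi1p : 0 < (1 + t * s⁻¹)⁻¹ := by positivity
        have hi2p : 0 < (1 + t * lam k)⁻¹ := by positivity
        have hw2 : (0:ℝ) ≤ (w k)^2 := sq_nonneg _
        have e1 : |(1 + t * s⁻¹)⁻¹ * ((1 + t * lam k)⁻¹ * (s⁻¹ - lam k))| ≤ s⁻¹ + lam k := by
          rw [abs_mul, abs_mul, abs_of_pos hi1p, abs_of_pos hi2p]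
          have h5 : |s⁻¹ - lam k| ≤ s⁻¹ + lam k := by
            rw [abs_le]; constructor <;> nlinarith
          have t1 := mul_le_mul_of_nonneg_right hi2 (abs_nonneg (s⁻¹ - lam k))
          have t2 := mul_le_mul_of_nonneg_right hi1
            (mul_nonneg hi2p.le (abs_nonneg (s⁻¹ - lam k)))
          rw [one_mul] at t1 t2
          calc (1 + t * s⁻¹)⁻¹ * ((1 + t * lam k)⁻¹ * |s⁻¹ - lam k|)
              ≤ (1 + t * lam k)⁻¹ * |s⁻¹ - lam k| := t2
            _ ≤ |s⁻¹ - lam k| := t1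
            _ ≤ s⁻¹ + lam k := h5
        have e2 : |(1 + t * lam k)⁻¹ * ((1 + t * lam k)⁻¹ * lam k)| ≤ lam k := by
          rw [abs_mul, abs_mul, abs_of_pos hi2p, abs_of_pos hl]
          have t1 := mul_le_mul_of_nonneg_right hi2 hl.le
          have t2 := mul_le_mul_of_nonneg_right hi2 (mul_nonneg hi2p.le hl.le)
          rw [one_mul] at t1 t2
          calc (1 + t * lam k)⁻¹ * ((1 + t * lam k)⁻¹ * lam k)
              ≤ (1 + t * lam k)⁻¹ * lam k := t2
            _ ≤ lam k := t1
        have e3 : |((1 + t * lam k)⁻¹ * (1 + t * lam k)⁻¹) * (w k) ^ 2| ≤ (w k) ^ 2 := by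
          rw [abs_mul, abs_mul, abs_of_pos hi2p, abs_of_nonneg hw2]
          have t1 := mul_le_mul_of_nonneg_right hi2 hw2
          have t2 := mul_le_mul_of_nonneg_right
            (mul_le_mul_of_nonneg_right hi2 hi2p.le) hw2
          rw [one_mul] at t1 t2
          calc (1 + t * lam k)⁻¹ * (1 + t * lam k)⁻¹ * (w k) ^ 2
              ≤ (1 + t * lam k)⁻¹ * (w k) ^ 2 := t2
            _ ≤ (w k) ^ 2 := t1
        set X := (1 + t * s⁻¹)⁻¹ * ((1 + t * lam k)⁻¹ * (s⁻¹ - lam k))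
        set Y := (1 + t * lam k)⁻¹ * ((1 + t * lam k)⁻¹ * lam k)
        set Z := ((1 + t * lam k)⁻¹ * (1 + t * lam k)⁻¹) * (w k) ^ 2
        have htri : |X + Y - Z| ≤ |X| + |Y| + |Z| :=
          (abs_sub _ _).trans (add_le_add_left (abs_add_le _ _) _)
        calc |1 / 2 * (X + Y - Z)| = 1 / 2 * |X + Y - Z| := by rw [abs_mul]; norm_num
          _ ≤ (s⁻¹ + lam k) / 2 + lam k / 2 + (w k) ^ 2 / 2 := by nlinarith
    _ = (d : ℝ) * s⁻¹ / 2 + (∑ k, lam k) + (∑ k, (w k)^2) / 2 := by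
        rw [Finset.sum_add_distrib, Finset.sum_add_distrib, ← Finset.sum_div, ← Finset.sum_div,
          ← Finset.sum_div, Finset.sum_add_distrib, Finset.sum_const, Finset.card_univ,
          Fintype.card_fin, nsmul_eq_mul]
        ring
end Main


section Deriv
variable {d : ℕ} {A : Matrix (Fin d) (Fin d) ℝ}

lemma fFun_hasDeriv (hA : A.IsHermitian) (hlam : ∀ k, 0 < hA.eigenvalues k) {s : ℝ}
    (hs : 0 < s) (v : Fin d → ℝ) {t : ℝ} (ht : 0 < t) :
    HasDerivAt (fFun d s A v) (DFun d s A v t) t := by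
  set U : Matrix (Fin d) (Fin d) ℝ := (hA.eigenvectorUnitary : Matrix (Fin d) (Fin d) ℝ)
  set lam := hA.eigenvalues
  set w : Fin d → ℝ := star U *ᵥ v
  have hs1 : 0 < s⁻¹ := by positivity
  -- from the scalar formula
  have heq : ∀ t' ∈ Set.Ioi (0:ℝ), fFun d s A v t' =
      (∑ k, (-(1 / 2) * Real.log (t'⁻¹ + lam k) - 1 / 2 * (t'⁻¹ * (t'⁻¹ + lam k)⁻¹) -
        1 / 2 * ((w k) ^ 2 * (t'⁻¹ + lam k)⁻¹))) + (d : ℝ) / 2 * Real.log (s⁻¹ + t'⁻¹) :=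
    fun t' ht' => fFun_eq hA hlam s hs v ht'
  have hEv : (fun t' => (∑ k, (-(1 / 2) * Real.log (t'⁻¹ + lam k) -
      1 / 2 * (t'⁻¹ * (t'⁻¹ + lam k)⁻¹) - 1 / 2 * ((w k) ^ 2 * (t'⁻¹ + lam k)⁻¹))) +
      (d : ℝ) / 2 * Real.log (s⁻¹ + t'⁻¹)) =ᶠ[nhds t] fFun d s A v := by
    filter_upwards [Ioi_mem_nhds ht] with r hr
    exact (heq r hr).symm
  -- derivative of each scalar summand
  have hu : HasDerivAt (fun r : ℝ => r⁻¹) (-(t ^ 2)⁻¹) t := hasDerivAt_inv ht.ne'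
  have hckpos : ∀ k, 0 < t⁻¹ + lam k := fun k => by have := hlam k; positivity
  have hterm : ∀ k : Fin d, HasDerivAt
      (fun r : ℝ => -(1 / 2) * Real.log (r⁻¹ + lam k) - 1 / 2 * (r⁻¹ * (r⁻¹ + lam k)⁻¹) -
        1 / 2 * ((w k) ^ 2 * (r⁻¹ + lam k)⁻¹))
      (-(1 / 2) * ((t⁻¹ + lam k)⁻¹ * (-(t ^ 2)⁻¹)) -
        1 / 2 * ((-(t ^ 2)⁻¹) * (t⁻¹ + lam k)⁻¹ + t⁻¹ * (-(-(t ^ 2)⁻¹) / (t⁻¹ + lam k) ^ 2)) -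
        1 / 2 * ((w k) ^ 2 * (-(-(t ^ 2)⁻¹) / (t⁻¹ + lam k) ^ 2))) t := by
    intro k
    have hc : HasDerivAt (fun r : ℝ => r⁻¹ + lam k) (-(t ^ 2)⁻¹) t := hu.add_const _
    have hcne : t⁻¹ + lam k ≠ 0 := (hckpos k).ne'
    have hlog : HasDerivAt (fun r : ℝ => Real.log (r⁻¹ + lam k))
        ((t⁻¹ + lam k)⁻¹ * (-(t ^ 2)⁻¹)) t := by
      have := (Real.hasDerivAt_log hcne).comp t hc
      simpa [Function.comp_def] using this
    have hinv : HasDerivAt (fun r : ℝ => (r⁻¹ + lam k)⁻¹)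
        (-(-(t ^ 2)⁻¹) / (t⁻¹ + lam k) ^ 2) t := hc.inv hcne
    have hmul : HasDerivAt (fun r : ℝ => r⁻¹ * (r⁻¹ + lam k)⁻¹)
        ((-(t ^ 2)⁻¹) * (t⁻¹ + lam k)⁻¹ + t⁻¹ * (-(-(t ^ 2)⁻¹) / (t⁻¹ + lam k) ^ 2)) t :=
      hu.mul hinv
    exact ((hlog.const_mul (-(1/2))).sub (hmul.const_mul (1/2))).sub
      ((hinv.const_mul ((w k) ^ 2)).const_mul (1/2))
  have hpsi : HasDerivAt (fun r : ℝ => (d : ℝ) / 2 * Real.log (s⁻¹ + r⁻¹))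
      ((d : ℝ) / 2 * ((s⁻¹ + t⁻¹)⁻¹ * (-(t ^ 2)⁻¹))) t := by
    have hc : HasDerivAt (fun r : ℝ => s⁻¹ + r⁻¹) (-(t ^ 2)⁻¹) t := hu.const_add _
    have hcne : s⁻¹ + t⁻¹ ≠ 0 := by positivity
    have := (Real.hasDerivAt_log hcne).comp t hc
    exact (by simpa [Function.comp_def] using this : HasDerivAt _ ((s⁻¹ + t⁻¹)⁻¹ * (-(t ^ 2)⁻¹)) t
      ).const_mul ((d : ℝ)/2)
  have hsum := (HasDerivAt.fun_sum (u := Finset.univ) (fun k _ => hterm k)).add hpsi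
  have hder := hsum.congr_of_eventuallyEq hEv.symm
  -- now identify the derivative value with DFun
  have hval : (∑ k, (-(1 / 2) * ((t⁻¹ + lam k)⁻¹ * (-(t ^ 2)⁻¹)) -
        1 / 2 * ((-(t ^ 2)⁻¹) * (t⁻¹ + lam k)⁻¹ + t⁻¹ * (-(-(t ^ 2)⁻¹) / (t⁻¹ + lam k) ^ 2)) -
        1 / 2 * ((w k) ^ 2 * (-(-(t ^ 2)⁻¹) / (t⁻¹ + lam k) ^ 2)))) +
      (d : ℝ) / 2 * ((s⁻¹ + t⁻¹)⁻¹ * (-(t ^ 2)⁻¹)) = DFun d s A v t := by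
    rw [DFun_eq hA hlam s v ht.le]
    rw [show hA.eigenvalues = lam from rfl]
    rw [show ((d : ℝ) / 2 * ((s⁻¹ + t⁻¹)⁻¹ * (-(t ^ 2)⁻¹)))
        = ∑ _k : Fin d, (1 / 2 * ((s⁻¹ + t⁻¹)⁻¹ * (-(t ^ 2)⁻¹))) by
      rw [Finset.sum_const, Finset.card_univ, Fintype.card_fin, nsmul_eq_mul]; ring]
    rw [← Finset.sum_add_distrib]
    apply Finset.sum_congr rfl
    intro k _
    have hl := hlam k
    have h2 : (0:ℝ) < 1 + t * lam k := by nlinarith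
    have h3 : (0:ℝ) < 1 + t * s⁻¹ := by nlinarith
    have hck : (0:ℝ) < t⁻¹ + lam k := hckpos k
    have hst : (0:ℝ) < s⁻¹ + t⁻¹ := by positivity
    field_simp [ht.ne', (hckpos k).ne', hst.ne', h2.ne', h3.ne']
    ring
  rw [← hval]
  exact hder

lemma DFun_tendsto_zero (hA : A.IsHermitian) (hlam : ∀ k, 0 < hA.eigenvalues k) (s : ℝ)
    (v : Fin d → ℝ) :
    Tendsto (fun t => DFun d s A v t) (nhdsWithin 0 (Set.Ioi (0:ℝ)))
      (nhds (DFun d s A v 0)) := by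
  set U : Matrix (Fin d) (Fin d) ℝ := (hA.eigenvectorUnitary : Matrix (Fin d) (Fin d) ℝ)
  set lam := hA.eigenvalues
  set w : Fin d → ℝ := star U *ᵥ v
  set g : ℝ → ℝ := fun t => ∑ k, (1 / 2 * ((1 + t * s⁻¹)⁻¹ *
      ((1 + t * lam k)⁻¹ * (s⁻¹ - lam k)) +
      (1 + t * lam k)⁻¹ * ((1 + t * lam k)⁻¹ * lam k) -
      ((1 + t * lam k)⁻¹ * (1 + t * lam k)⁻¹) * (w k) ^ 2)) with hg
  have hcont : Tendsto g (nhds 0) (nhds (g 0)) := by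
    rw [hg]
    refine tendsto_finset_sum _ (fun k _ => ?_)
    have c1 : ContinuousAt (fun t : ℝ => (1 + t * s⁻¹)⁻¹) 0 := by
      apply ContinuousAt.inv₀ (by fun_prop)
      norm_num
    have c2 : ContinuousAt (fun t : ℝ => (1 + t * lam k)⁻¹) 0 := by
      apply ContinuousAt.inv₀ (by fun_prop)
      norm_num
    have : ContinuousAt (fun t : ℝ => 1 / 2 * ((1 + t * s⁻¹)⁻¹ *
        ((1 + t * lam k)⁻¹ * (s⁻¹ - lam k)) +
        (1 + t * lam k)⁻¹ * ((1 + t * lam k)⁻¹ * lam k) -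
        ((1 + t * lam k)⁻¹ * (1 + t * lam k)⁻¹) * (w k) ^ 2)) 0 :=
      (((c1.mul (c2.mul continuousAt_const)).add
        (c2.mul (c2.mul continuousAt_const))).sub
        ((c2.mul c2).mul continuousAt_const)).const_mul _
    exact this
  have h0 : g 0 = DFun d s A v 0 := by
    rw [hg]
    simp only
    exact (DFun_eq hA hlam s v le_rfl).symm
  have hmain : Tendsto g (nhdsWithin 0 (Set.Ioi (0:ℝ))) (nhds (DFun d s A v 0)) := by
    rw [← h0]
    exact hcont.mono_left nhdsWithin_le_nhds
  apply hmain.congr'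
  filter_upwards [self_mem_nhdsWithin] with t (htpos : t ∈ Set.Ioi (0:ℝ))
  rw [hg]
  exact (DFun_eq hA hlam s v (le_of_lt htpos)).symm

end Deriv
section Gp
variable {d : ℕ} {s : ℝ} (hs : 0 < s) (μ : EuclideanSpace ℝ (Fin d))
  {gp : EuclideanSpace ℝ (Fin d) → ℝ}
  (hgp : ∀ x, gp x = (2 * Real.pi * s⁻¹) ^ (-(d : ℝ) / 2) *
    Real.exp (-‖x - μ‖ ^ 2 / (2 * s⁻¹)))

include hs hgp

lemma gp_eq : gp = fun x =>
    (2 * Real.pi * s⁻¹) ^ (-(d : ℝ) / 2) * Real.exp (-(s / 2) * ‖x - μ‖ ^ 2) := by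
  funext x
  rw [hgp x]
  congr 1
  congr 1
  field_simp

lemma gp_nonneg (x : EuclideanSpace ℝ (Fin d)) : 0 ≤ gp x := by
  rw [hgp x]
  positivity

lemma gp_cont : Continuous gp := by
  rw [gp_eq hs μ hgp]
  fun_prop

lemma gp_int : Integrable gp := by
  rw [gp_eq hs μ hgp]
  apply Integrable.const_mul
  have h := (integrable_gauss d (show 0 < s/2 by positivity)).comp_sub_right μ
  simpa using h

lemma gp_sq_int : Integrable (fun x => gp x * ‖x - μ‖ ^ 2) := by
  rw [gp_eq hs μ hgp]
  refine (((integrable_sq_gauss d (show 0 < s/2 by positivity)).comp_sub_right μ).const_mul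
    ((2 * Real.pi * s⁻¹) ^ (-(d : ℝ) / 2))).congr (Filter.Eventually.of_forall fun x => ?_)
  show (2 * Real.pi * s⁻¹) ^ (-(d : ℝ) / 2) * (‖x - μ‖ ^ 2 * Real.exp (-(s/2) * ‖x - μ‖ ^ 2)) = _
  ring

lemma gp_norm_one : ∫ x, gp x = 1 := by
  rw [gp_eq hs μ hgp]
  rw [integral_const_mul]
  have h1 : ∫ x : EuclideanSpace ℝ (Fin d), Real.exp (-(s/2) * ‖x - μ‖ ^ 2)
      = ∫ x : EuclideanSpace ℝ (Fin d), Real.exp (-(s/2) * ‖x‖ ^ 2) := by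
    exact integral_sub_right_eq_self (fun y => Real.exp (-(s/2) * ‖y‖ ^ 2)) μ
  rw [h1, GaussianFourier.integral_rexp_neg_mul_sq_norm (by positivity : 0 < s/2)]
  rw [finrank_euclideanSpace_fin]
  have hbase : Real.pi / (s / 2) = 2 * Real.pi * s⁻¹ := by
    field_simp
  rw [hbase]
  rw [← Real.rpow_add (by positivity), show (-(d:ℝ)/2 + d/2) = 0 by ring, Real.rpow_zero]

lemma gp_moment : ∫ x, gp x * ‖x - μ‖ ^ 2 = d * s⁻¹ := by
  rw [gp_eq hs μ hgp]
  have hb : 0 < s / 2 := by positivity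
  have h0 : (fun x : EuclideanSpace ℝ (Fin d) =>
      (2 * Real.pi * s⁻¹) ^ (-(d : ℝ) / 2) * Real.exp (-(s/2) * ‖x - μ‖ ^ 2) * ‖x - μ‖ ^ 2)
      = fun x => (2 * Real.pi * s⁻¹) ^ (-(d : ℝ) / 2) *
        (‖x - μ‖ ^ 2 * Real.exp (-(s/2) * ‖x - μ‖ ^ 2)) := by
    funext x; ring
  rw [h0, integral_const_mul]
  have h1 : ∫ x : EuclideanSpace ℝ (Fin d), ‖x - μ‖ ^ 2 * Real.exp (-(s/2) * ‖x - μ‖ ^ 2)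
      = ∫ x : EuclideanSpace ℝ (Fin d), ‖x‖ ^ 2 * Real.exp (-(s/2) * ‖x‖ ^ 2) :=
    integral_sub_right_eq_self (fun y => ‖y‖ ^ 2 * Real.exp (-(s/2) * ‖y‖ ^ 2)) μ
  rw [h1, gauss_moment d hb, GaussianFourier.integral_rexp_neg_mul_sq_norm hb,
    finrank_euclideanSpace_fin]
  have hbase : Real.pi / (s / 2) = 2 * Real.pi * s⁻¹ := by
    field_simp
  rw [hbase, ← mul_assoc, mul_comm ((2 * Real.pi * s⁻¹) ^ (-(d : ℝ) / 2)), mul_assoc,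
    ← Real.rpow_add (by positivity)]
  norm_num
  field_simp
  simp

end Gp

section Meas
variable {X : Type*} [MeasurableSpace X] {d : ℕ}

lemma meas_det {M : X → Matrix (Fin d) (Fin d) ℝ} (h : ∀ i j, Measurable fun x => M x i j) :
    Measurable fun x => (M x).det := by
  simp_rw [Matrix.det_apply, Units.smul_def, zsmul_eq_mul]
  exact Finset.measurable_sum _ fun σ _ =>
    (Finset.measurable_prod _ fun i _ => h _ _).const_mul _

lemma meas_adjugate {M : X → Matrix (Fin d) (Fin d) ℝ}
    (h : ∀ i j, Measurable fun x => M x i j) (i j : Fin d) :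
    Measurable fun x => (M x).adjugate i j := by
  simp_rw [Matrix.adjugate_apply]
  apply meas_det
  intro a b
  simp_rw [Matrix.updateRow_apply]
  by_cases hab : a = j
  · simp [hab]
  · simp [hab]; exact h a b

lemma meas_inv {M : X → Matrix (Fin d) (Fin d) ℝ}
    (h : ∀ i j, Measurable fun x => M x i j) (i j : Fin d) :
    Measurable fun x => (M x)⁻¹ i j := by
  simp_rw [Matrix.inv_def, Matrix.smul_apply, Ring.inverse_eq_inv, smul_eq_mul]
  exact ((meas_det h).inv).mul (meas_adjugate h i j)

lemma meas_trace {M : X → Matrix (Fin d) (Fin d) ℝ}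
    (h : ∀ i j, Measurable fun x => M x i j) :
    Measurable fun x => (M x).trace := by
  unfold Matrix.trace Matrix.diag
  exact Finset.measurable_sum _ fun i _ => h i i

lemma meas_quad {M : X → Matrix (Fin d) (Fin d) ℝ} {v : X → Fin d → ℝ}
    (h : ∀ i j, Measurable fun x => M x i j) (hv : ∀ i, Measurable fun x => v x i) :
    Measurable fun x => (v x) ⬝ᵥ (M x) *ᵥ (v x) := by
  unfold dotProduct Matrix.mulVec
  apply Finset.measurable_sum
  intro i _
  apply (hv i).mul
  unfold dotProduct
  exact Finset.measurable_sum _ fun j _ => (h i j).mul (hv j)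

end Meas

section New
variable {d : ℕ} {A : Matrix (Fin d) (Fin d) ℝ}

lemma fFun_bound (hA : A.IsHermitian) (hlam : ∀ k, 0 < hA.eigenvalues k) {s : ℝ} (hs : 0 < s)
    (v : Fin d → ℝ) {t : ℝ} (ht : 0 < t) :
    |fFun d s A v t| ≤ (d : ℝ) / 2 * |Real.log t⁻¹| + t / 2 * A.trace + (d : ℝ) / 2 +
      t / 2 * (v ⬝ᵥ v) + (d : ℝ) / 2 * |Real.log (s⁻¹ + t⁻¹)| := by
  have ht1 : 0 < t⁻¹ := by positivity
  rw [fFun_eq hA hlam s hs v ht, trace_eq_sum_eigs hA,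
    show (v ⬝ᵥ v) = ∑ k, ((star (hA.eigenvectorUnitary : Matrix (Fin d) (Fin d) ℝ) *ᵥ v) k) ^ 2
      from (sum_w_sq (hU1' hA) v).symm]
  set w : Fin d → ℝ := star (hA.eigenvectorUnitary : Matrix (Fin d) (Fin d) ℝ) *ᵥ v
  set lam := hA.eigenvalues
  have habs : |(∑ k, (-(1 / 2) * Real.log (t⁻¹ + lam k) -
        1 / 2 * (t⁻¹ * (t⁻¹ + lam k)⁻¹) - 1 / 2 * ((w k) ^ 2 * (t⁻¹ + lam k)⁻¹))) +
      (d : ℝ) / 2 * Real.log (s⁻¹ + t⁻¹)|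
      ≤ (∑ k, |(-(1 / 2) * Real.log (t⁻¹ + lam k) -
        1 / 2 * (t⁻¹ * (t⁻¹ + lam k)⁻¹) - 1 / 2 * ((w k) ^ 2 * (t⁻¹ + lam k)⁻¹))|) +
      (d : ℝ) / 2 * |Real.log (s⁻¹ + t⁻¹)| := by
    refine (abs_add_le _ _).trans (add_le_add (Finset.abs_sum_le_sum_abs _ _) ?_)
    rw [abs_mul]
    apply mul_le_mul_of_nonneg_right _ (abs_nonneg _)
    rw [abs_of_nonneg (by positivity)]
  refine habs.trans ?_
  have hterm : ∀ k : Fin d, |(-(1 / 2) * Real.log (t⁻¹ + lam k) -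
      1 / 2 * (t⁻¹ * (t⁻¹ + lam k)⁻¹) - 1 / 2 * ((w k) ^ 2 * (t⁻¹ + lam k)⁻¹))|
      ≤ 1 / 2 * |Real.log t⁻¹| + t / 2 * lam k + 1 / 2 + t / 2 * (w k) ^ 2 := by
    intro k
    have hl := hlam k
    have hc : 0 < t⁻¹ + lam k := by positivity
    have hinvle : (t⁻¹ + lam k)⁻¹ ≤ t := by
      rw [inv_le_comm₀ hc ht]
      exact le_add_of_nonneg_right hl.le
    have hinvpos : 0 < (t⁻¹ + lam k)⁻¹ := by positivity
    have e1 : |Real.log (t⁻¹ + lam k)| ≤ |Real.log t⁻¹| + t * lam k := by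
      have hup : Real.log (t⁻¹ + lam k) ≤ Real.log t⁻¹ + t * lam k := by
        have hsplit : t⁻¹ + lam k = t⁻¹ * (1 + t * lam k) := by
          rw [mul_add, mul_one, ← mul_assoc, inv_mul_cancel₀ ht.ne', one_mul]
        rw [hsplit, Real.log_mul ht1.ne' (by nlinarith [mul_pos ht hl])]
        have := Real.log_le_sub_one_of_pos (show (0:ℝ) < 1 + t * lam k by nlinarith)
        linarith
      have hlo : Real.log t⁻¹ ≤ Real.log (t⁻¹ + lam k) :=
        Real.log_le_log ht1 (le_add_of_nonneg_right hl.le)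
      rw [abs_le]
      constructor
      · calc -(|Real.log t⁻¹| + t * lam k) ≤ -|Real.log t⁻¹| := by nlinarith [mul_pos ht hl]
          _ ≤ Real.log t⁻¹ := neg_abs_le _
          _ ≤ _ := hlo
      · calc Real.log (t⁻¹ + lam k) ≤ Real.log t⁻¹ + t * lam k := hup
          _ ≤ |Real.log t⁻¹| + t * lam k := by linarith [le_abs_self (Real.log t⁻¹)]
    have e2 : t⁻¹ * (t⁻¹ + lam k)⁻¹ ≤ 1 := by
      calc t⁻¹ * (t⁻¹ + lam k)⁻¹ ≤ t⁻¹ * t := by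
            exact mul_le_mul_of_nonneg_left hinvle ht1.le
        _ = 1 := by field_simp
    have e2' : 0 ≤ t⁻¹ * (t⁻¹ + lam k)⁻¹ := by positivity
    have e3 : (w k) ^ 2 * (t⁻¹ + lam k)⁻¹ ≤ t * (w k) ^ 2 := by
      calc (w k) ^ 2 * (t⁻¹ + lam k)⁻¹ ≤ (w k) ^ 2 * t :=
            mul_le_mul_of_nonneg_left hinvle (sq_nonneg _)
        _ = t * (w k) ^ 2 := by ring
    have e3' : 0 ≤ (w k) ^ 2 * (t⁻¹ + lam k)⁻¹ := by positivity
    calc |(-(1 / 2) * Real.log (t⁻¹ + lam k) - 1 / 2 * (t⁻¹ * (t⁻¹ + lam k)⁻¹) -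
          1 / 2 * ((w k) ^ 2 * (t⁻¹ + lam k)⁻¹))|
        ≤ |(-(1 / 2)) * Real.log (t⁻¹ + lam k)| + |1 / 2 * (t⁻¹ * (t⁻¹ + lam k)⁻¹)| +
          |1 / 2 * ((w k) ^ 2 * (t⁻¹ + lam k)⁻¹)| :=
          (abs_sub _ _).trans (add_le_add_left (abs_sub _ _) _)
      _ ≤ 1 / 2 * |Real.log t⁻¹| + t / 2 * lam k + 1 / 2 + t / 2 * (w k) ^ 2 := by
          simp only [abs_mul]
          rw [show |(-(1 / 2) : ℝ)| = 1/2 by norm_num, show |(1/2 : ℝ)| = 1/2 by norm_num,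
            abs_of_nonneg ht1.le, abs_of_nonneg hinvpos.le, abs_of_nonneg (sq_nonneg (w k))]
          linarith [e1, e2, e3]
  calc (∑ k, |(-(1 / 2) * Real.log (t⁻¹ + lam k) -
        1 / 2 * (t⁻¹ * (t⁻¹ + lam k)⁻¹) - 1 / 2 * ((w k) ^ 2 * (t⁻¹ + lam k)⁻¹))|) +
      (d : ℝ) / 2 * |Real.log (s⁻¹ + t⁻¹)|
      ≤ (∑ k : Fin d, (1 / 2 * |Real.log t⁻¹| + t / 2 * lam k + 1 / 2 + t / 2 * (w k) ^ 2)) +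
        (d : ℝ) / 2 * |Real.log (s⁻¹ + t⁻¹)| :=
        add_le_add_left (Finset.sum_le_sum fun k _ => hterm k) _
    _ = (d : ℝ) / 2 * |Real.log t⁻¹| + t / 2 * (∑ k, lam k) + (d : ℝ) / 2 +
        t / 2 * (∑ k, (w k) ^ 2) + (d : ℝ) / 2 * |Real.log (s⁻¹ + t⁻¹)| := by
        rw [Finset.sum_add_distrib, Finset.sum_add_distrib, Finset.sum_add_distrib,
          Finset.sum_const, Finset.sum_const, Finset.card_univ, Fintype.card_fin,
          nsmul_eq_mul, nsmul_eq_mul, ← Finset.mul_sum, ← Finset.mul_sum]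
        ring

variable {X : Type*} [MeasurableSpace X]

lemma meas_mul {M N : X → Matrix (Fin d) (Fin d) ℝ}
    (hM : ∀ i j, Measurable fun x => M x i j) (hN : ∀ i j, Measurable fun x => N x i j)
    (i j : Fin d) : Measurable fun x => (M x * N x) i j := by
  simp_rw [Matrix.mul_apply]
  exact Finset.measurable_sum _ fun k _ => (hM i k).mul (hN k j)

end New

end IRM

open IRM

/-- Theorem 1 (ii) of the paper.  Let `x ~ N_d(μ, s⁻¹ I_d)` with density `gp`, and for
`t > 0` let `Σ̂_t(x) = t⁻¹ I_d + A(x)` with `A(x) = s⁻¹ I_d + H(x)` positive definite.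
Let `G t` be the Kullback–Leibler risk difference between the uniform-prior predictive
density `N_d(x, (s⁻¹+t⁻¹) I_d)` and the extended plug-in density `N_d(μ̂(x), Σ̂_t(x))`
when the future observation is `N_d(μ, t⁻¹ I_d)`.  Then
`G'(t) → (d s⁻¹ - E‖μ̂(x) - μ‖²)/2` as `t → 0⁺`. -/
theorem infinitesimal_risk_matrix (d : ℕ) (s : ℝ) (hs : 0 < s)
    (μ : EuclideanSpace ℝ (Fin d))
    (μhat : EuclideanSpace ℝ (Fin d) → EuclideanSpace ℝ (Fin d)) (hμhat : Measurable μhat)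
    (H : EuclideanSpace ℝ (Fin d) → Matrix (Fin d) (Fin d) ℝ)
    (hH : ∀ i j, Measurable fun x => H x i j)
    (hsymm : ∀ x, (H x).IsSymm)
    (hposdef : ∀ x, (s⁻¹ • (1 : Matrix (Fin d) (Fin d) ℝ) + H x).PosDef)
    (gp : EuclideanSpace ℝ (Fin d) → ℝ)
    (hgp : ∀ x, gp x =
      (2 * Real.pi * s⁻¹) ^ (-(d : ℝ) / 2) * Real.exp (-‖x - μ‖ ^ 2 / (2 * s⁻¹)))
    -- suitable integrability
    (hint1 : Integrable (fun x => gp x * ‖μhat x - μ‖ ^ 2))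
    (hint2 : Integrable (fun x => gp x * ∑ i, ∑ j, (H x i j) ^ 2))
    (G : ℝ → ℝ)
    (hG : ∀ t : ℝ, 0 < t → G t =
      (∫ x, gp x *
          (-(1 / 2) * Real.log
              ((t⁻¹ • (1 : Matrix (Fin d) (Fin d) ℝ) +
                  (s⁻¹ • (1 : Matrix (Fin d) (Fin d) ℝ) + H x)).det /
                (s⁻¹ + t⁻¹) ^ d) -
            (1 / 2) *
              (t⁻¹ *
                  ((t⁻¹ • (1 : Matrix (Fin d) (Fin d) ℝ) +
                      (s⁻¹ • (1 : Matrix (Fin d) (Fin d) ℝ) + H x))⁻¹).trace +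
                ((fun i => μ i - μhat x i) ⬝ᵥ
                  ((t⁻¹ • (1 : Matrix (Fin d) (Fin d) ℝ) +
                      (s⁻¹ • (1 : Matrix (Fin d) (Fin d) ℝ) + H x))⁻¹ *ᵥ
                    fun i => μ i - μhat x i))))) +
        (d : ℝ) / 2 +
        (∫ x, gp x * ((d * t⁻¹ + ‖μ - x‖ ^ 2) / (2 * (s⁻¹ + t⁻¹)))) - (d : ℝ) / 2) :
    Tendsto (fun t => deriv G t) (nhdsWithin 0 (Set.Ioi (0 : ℝ)))
      (nhds ((d * s⁻¹ - ∫ x, gp x * ‖μhat x - μ‖ ^ 2) / 2)) := by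
  have hs1 : 0 < s⁻¹ := by positivity
  set A : EuclideanSpace ℝ (Fin d) → Matrix (Fin d) (Fin d) ℝ :=
    fun x => s⁻¹ • (1 : Matrix (Fin d) (Fin d) ℝ) + H x with hA_def
  set v : EuclideanSpace ℝ (Fin d) → (Fin d → ℝ) := fun x i => μ i - μhat x i with hv_def
  have hAh : ∀ x, (A x).IsHermitian := fun x => (hposdef x).1
  have hlam : ∀ x, ∀ k, 0 < (hAh x).eigenvalues k := fun x => (hposdef x).eigenvalues_pos
  -- (v x) ⬝ᵥ (v x) = ‖μhat x - μ‖ ^ 2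
  have hvv : ∀ x, (v x) ⬝ᵥ (v x) = ‖μhat x - μ‖ ^ 2 := by
    intro x
    rw [EuclideanSpace.norm_eq,
      Real.sq_sqrt (Finset.sum_nonneg fun i _ => by positivity)]
    unfold dotProduct
    apply Finset.sum_congr rfl
    intro i _
    have h0 : (μhat x - μ) i = μhat x i - μ i := rfl
    rw [h0, Real.norm_eq_abs, sq_abs]
    show (μ i - μhat x i) * (μ i - μhat x i) = _
    ring
  -- measurability of entries
  have hAm : ∀ i j, Measurable fun x => A x i j := by
    intro i j
    have : (fun x => A x i j) = fun x => (s⁻¹ • (1 : Matrix (Fin d) (Fin d) ℝ)) i j + H x i j := by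
      funext x; rw [hA_def]; rfl
    rw [this]
    exact (hH i j).const_add _
  have hvm : ∀ i, Measurable fun x => v x i := by
    intro i
    have hcoord : Measurable fun x => μhat x i := by
      exact (EuclideanSpace.proj (𝕜 := ℝ) i).continuous.measurable.comp hμhat
    exact hcoord.const_sub _
  -- gp facts
  have hgpc : Continuous gp := gp_cont hs μ hgp
  have hgpnn : ∀ x, 0 ≤ gp x := gp_nonneg hs μ hgp
  have hgpint : Integrable gp := gp_int hs μ hgp
  -- trace bound
  have htrB : ∀ x, (A x).trace ≤ (d : ℝ) * s⁻¹ + ((d : ℝ) / 2 + (∑ i, ∑ j, (H x i j) ^ 2) / 2) := by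
    intro x
    have h1 : (A x).trace = (d : ℝ) * s⁻¹ + (H x).trace := by
      rw [hA_def]
      simp [Matrix.trace_add, Matrix.trace_smul, Matrix.trace_one]
      ring
    rw [h1]
    have h2 : (H x).trace ≤ (d : ℝ) / 2 + (∑ i, ∑ j, (H x i j) ^ 2) / 2 := by
      have e1 : (H x).trace = ∑ i, H x i i := rfl
      have e2 : ∑ i, H x i i ≤ ∑ i : Fin d, (1 + (H x i i) ^ 2) / 2 :=
        Finset.sum_le_sum fun i _ => by nlinarith [sq_nonneg (H x i i - 1)]
      have e3 : ∑ i : Fin d, (1 + (H x i i) ^ 2) / 2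
          = (d : ℝ) / 2 + (∑ i, (H x i i) ^ 2) / 2 := by
        rw [← Finset.sum_div, Finset.sum_add_distrib, Finset.sum_const, Finset.card_univ,
          Fintype.card_fin, nsmul_eq_mul]
        ring
      have e4 : ∑ i, (H x i i) ^ 2 ≤ ∑ i, ∑ j, (H x i j) ^ 2 :=
        Finset.sum_le_sum fun i _ =>
          Finset.single_le_sum (f := fun j => (H x i j) ^ 2) (fun j _ => sq_nonneg _)
            (Finset.mem_univ i)
      rw [e1]
      linarith
    linarith
  have htrnn : ∀ x, 0 ≤ (A x).trace := by
    intro x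
    rw [trace_eq_sum_eigs (hAh x)]
    exact Finset.sum_nonneg fun k _ => (hlam x k).le
  -- the uniform bound for the derivative integrand
  set B : EuclideanSpace ℝ (Fin d) → ℝ := fun x =>
    gp x * ((d : ℝ) * s⁻¹ / 2 + ((d : ℝ) * s⁻¹ + ((d : ℝ) / 2 + (∑ i, ∑ j, (H x i j) ^ 2) / 2))
      + ‖μhat x - μ‖ ^ 2 / 2) with hB_def
  have hBint : Integrable B := by
    have : B = fun x => ((3 : ℝ) / 2 * ((d : ℝ) * s⁻¹) + (d : ℝ) / 2) * gp x
        + (1 / 2) * (gp x * ∑ i, ∑ j, (H x i j) ^ 2)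
        + (1 / 2) * (gp x * ‖μhat x - μ‖ ^ 2) := by
      funext x; rw [hB_def]; ring
    rw [this]
    exact ((hgpint.const_mul _).add (hint2.const_mul _)).add (hint1.const_mul _)
  have hDbd : ∀ x, ∀ t : ℝ, 0 ≤ t → ‖gp x * DFun d s (A x) (v x) t‖ ≤ B x := by
    intro x t ht
    rw [Real.norm_eq_abs, abs_mul, abs_of_nonneg (hgpnn x), hB_def]
    apply mul_le_mul_of_nonneg_left _ (hgpnn x)
    calc |DFun d s (A x) (v x) t|
        ≤ (d : ℝ) * s⁻¹ / 2 + (A x).trace + ((v x) ⬝ᵥ (v x)) / 2 :=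
          DFun_bound (hAh x) (hlam x) hs (v x) ht
      _ ≤ _ := by
          rw [hvv x]
          have := htrB x
          linarith
  -- measurability of integrands
  have hMm : ∀ t : ℝ, ∀ i j, Measurable fun x =>
      (t⁻¹ • (1 : Matrix (Fin d) (Fin d) ℝ) + A x) i j := by
    intro t i j
    have : (fun x => (t⁻¹ • (1 : Matrix (Fin d) (Fin d) ℝ) + A x) i j)
        = fun x => (t⁻¹ • (1 : Matrix (Fin d) (Fin d) ℝ)) i j + A x i j := by
      funext x; rfl
    rw [this]
    exact (hAm i j).const_add _
  have hNm : ∀ t : ℝ, ∀ i j, Measurable fun x =>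
      ((1 : Matrix (Fin d) (Fin d) ℝ) + t • A x) i j := by
    intro t i j
    have : (fun x => ((1 : Matrix (Fin d) (Fin d) ℝ) + t • A x) i j)
        = fun x => (1 : Matrix (Fin d) (Fin d) ℝ) i j + t * A x i j := by
      funext x; rfl
    rw [this]
    exact ((hAm i j).const_mul t).const_add _
  have hfm : ∀ t : ℝ, Measurable fun x => gp x * fFun d s (A x) (v x) t := by
    intro t
    apply hgpc.measurable.mul
    unfold fFun
    apply Measurable.sub
    · exact (Real.measurable_log.comp ((meas_det (hMm t)).div_const _)).const_mul _
    · exact (((meas_trace (fun i j => meas_inv (hMm t) i j)).const_mul _).add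
        (meas_quad (fun i j => meas_inv (hMm t) i j) hvm)).const_mul _
  have hDm : ∀ t : ℝ, Measurable fun x => gp x * DFun d s (A x) (v x) t := by
    intro t
    apply hgpc.measurable.mul
    unfold DFun
    have hinv := fun i j => meas_inv (hNm t) i j
    have hsm : ∀ i j, Measurable fun x =>
        (s⁻¹ • (1 : Matrix (Fin d) (Fin d) ℝ) - A x) i j := by
      intro i j
      have : (fun x => (s⁻¹ • (1 : Matrix (Fin d) (Fin d) ℝ) - A x) i j)
          = fun x => (s⁻¹ • (1 : Matrix (Fin d) (Fin d) ℝ)) i j - A x i j := by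
        funext x; rfl
      rw [this]
      exact (hAm i j).const_sub _
    exact ((((meas_trace (meas_mul hinv hsm)).const_mul _).add
      (meas_trace (meas_mul hinv (meas_mul hinv hAm)))).sub
      (meas_quad (meas_mul hinv hinv) hvm)).const_mul _
  -- integrability of F t for t > 0
  have hFint : ∀ t : ℝ, 0 < t → Integrable (fun x => gp x * fFun d s (A x) (v x) t) := by
    intro t ht
    set K : ℝ := (d : ℝ) / 2 * |Real.log t⁻¹| + (d : ℝ) / 2 + (d : ℝ) / 2 * |Real.log (s⁻¹ + t⁻¹)|
      with hK_def
    set C : EuclideanSpace ℝ (Fin d) → ℝ := fun x =>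
      gp x * (K + t / 2 * ((d : ℝ) * s⁻¹ + ((d : ℝ) / 2 + (∑ i, ∑ j, (H x i j) ^ 2) / 2))
        + t / 2 * ‖μhat x - μ‖ ^ 2) with hC_def
    have hCint : Integrable C := by
      have : C = fun x => (K + t / 2 * ((d : ℝ) * s⁻¹) + t * (d : ℝ) / 4) * gp x
          + (t / 4) * (gp x * ∑ i, ∑ j, (H x i j) ^ 2)
          + (t / 2) * (gp x * ‖μhat x - μ‖ ^ 2) := by
        funext x; rw [hC_def]; ring
      rw [this]
      exact ((hgpint.const_mul _).add (hint2.const_mul _)).add (hint1.const_mul _)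
    refine hCint.mono (hfm t).aestronglyMeasurable
      (Filter.Eventually.of_forall fun x => ?_)
    rw [Real.norm_eq_abs, abs_mul, abs_of_nonneg (hgpnn x)]
    refine le_trans ?_ (le_abs_self (C x))
    rw [hC_def]
    apply mul_le_mul_of_nonneg_left _ (hgpnn x)
    calc |fFun d s (A x) (v x) t|
        ≤ (d : ℝ) / 2 * |Real.log t⁻¹| + t / 2 * (A x).trace + (d : ℝ) / 2 +
          t / 2 * ((v x) ⬝ᵥ (v x)) + (d : ℝ) / 2 * |Real.log (s⁻¹ + t⁻¹)| :=
          fFun_bound (hAh x) (hlam x) hs (v x) ht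
      _ ≤ _ := by
          rw [hvv x, hK_def]
          have h1 := htrB x
          have h2 : t / 2 * (A x).trace ≤ t / 2 *
              ((d : ℝ) * s⁻¹ + ((d : ℝ) / 2 + (∑ i, ∑ j, (H x i j) ^ 2) / 2)) :=
            mul_le_mul_of_nonneg_left h1 (by positivity)
          linarith
  -- the derivative of the first integral term
  have hI1 : ∀ t₀ : ℝ, 0 < t₀ → HasDerivAt (fun t => ∫ x, gp x * fFun d s (A x) (v x) t)
      (∫ x, gp x * DFun d s (A x) (v x) t₀) t₀ := by
    intro t₀ ht₀
    have hball : ∀ t ∈ Metric.ball t₀ (t₀/2), 0 < t := by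
      intro t htb
      have h := Metric.mem_ball.mp htb
      rw [Real.dist_eq] at h
      have := abs_lt.mp h
      linarith [this.1]
    have hres := hasDerivAt_integral_of_dominated_loc_of_deriv_le
      (F := fun t x => gp x * fFun d s (A x) (v x) t)
      (F' := fun t x => gp x * DFun d s (A x) (v x) t)
      (x₀ := t₀) (bound := B) (Metric.ball_mem_nhds t₀ (by positivity : (0:ℝ) < t₀/2))
      (Filter.Eventually.of_forall fun t => (hfm t).aestronglyMeasurable)
      (hFint t₀ ht₀) ((hDm t₀).aestronglyMeasurable)
      (Filter.Eventually.of_forall fun x t htb => hDbd x t (hball t htb).le)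
      hBint
      (Filter.Eventually.of_forall fun x t htb =>
        (fFun_hasDeriv (hAh x) (hlam x) hs (v x) (hball t htb)).const_mul (gp x))
    exact hres.2
  -- second integral is constantly d/2
  have hI2 : ∀ t : ℝ, 0 < t →
      (∫ x, gp x * (((d : ℝ) * t⁻¹ + ‖μ - x‖ ^ 2) / (2 * (s⁻¹ + t⁻¹)))) = (d : ℝ) / 2 := by
    intro t ht
    have ht1 : 0 < s⁻¹ + t⁻¹ := by positivity
    have heq : (fun x : EuclideanSpace ℝ (Fin d) =>
        gp x * (((d : ℝ) * t⁻¹ + ‖μ - x‖ ^ 2) / (2 * (s⁻¹ + t⁻¹))))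
        = fun x => (2 * (s⁻¹ + t⁻¹))⁻¹ * (((d : ℝ) * t⁻¹) * gp x + gp x * ‖x - μ‖ ^ 2) := by
      funext x
      rw [norm_sub_rev]
      ring
    rw [heq, integral_const_mul, integral_add (hgpint.const_mul _) (gp_sq_int hs μ hgp),
      integral_const_mul, gp_norm_one hs μ hgp, gp_moment hs μ hgp]
    field_simp
    ring
  -- deriv G
  have hderiv : ∀ t₀ : ℝ, 0 < t₀ → deriv G t₀ = ∫ x, gp x * DFun d s (A x) (v x) t₀ := by
    intro t₀ ht₀
    have hEv : G =ᶠ[nhds t₀]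
        fun t => (∫ x, gp x * fFun d s (A x) (v x) t) + (d : ℝ) / 2 := by
      filter_upwards [Ioi_mem_nhds ht₀] with t (ht : t ∈ Set.Ioi (0:ℝ))
      rw [hG t ht, hI2 t ht]
      have hfl : (∫ x, gp x *
          (-(1 / 2) * Real.log
              ((t⁻¹ • (1 : Matrix (Fin d) (Fin d) ℝ) +
                  (s⁻¹ • (1 : Matrix (Fin d) (Fin d) ℝ) + H x)).det /
                (s⁻¹ + t⁻¹) ^ d) -
            (1 / 2) *
              (t⁻¹ *
                  ((t⁻¹ • (1 : Matrix (Fin d) (Fin d) ℝ) +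
                      (s⁻¹ • (1 : Matrix (Fin d) (Fin d) ℝ) + H x))⁻¹).trace +
                ((fun i => μ i - μhat x i) ⬝ᵥ
                  ((t⁻¹ • (1 : Matrix (Fin d) (Fin d) ℝ) +
                      (s⁻¹ • (1 : Matrix (Fin d) (Fin d) ℝ) + H x))⁻¹ *ᵥ
                    fun i => μ i - μhat x i))))) = (∫ x, gp x * fFun d s (A x) (v x) t) := rfl
      rw [hfl]
      ring
    rw [hEv.deriv_eq]
    exact ((hI1 t₀ ht₀).add_const _).deriv
  -- target value
  have htar : (∫ x, gp x * DFun d s (A x) (v x) 0)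
      = ((d : ℝ) * s⁻¹ - ∫ x, gp x * ‖μhat x - μ‖ ^ 2) / 2 := by
    have heq : (fun x => gp x * DFun d s (A x) (v x) 0)
        = fun x => ((d : ℝ) * s⁻¹ / 2) * gp x - (1 / 2) * (gp x * ‖μhat x - μ‖ ^ 2) := by
      funext x
      rw [DFun_zero (hAh x) (hlam x) s (v x), hvv x]
      ring
    rw [heq, integral_sub (hgpint.const_mul _) (hint1.const_mul _), integral_const_mul,
      integral_const_mul, gp_norm_one hs μ hgp]
    ring
  -- dominated convergence
  have hkey : Tendsto (fun t => ∫ x, gp x * DFun d s (A x) (v x) t)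
      (nhdsWithin 0 (Set.Ioi (0:ℝ)))
      (nhds (∫ x, gp x * DFun d s (A x) (v x) 0)) := by
    apply tendsto_integral_filter_of_dominated_convergence B
      (Filter.Eventually.of_forall fun t => (hDm t).aestronglyMeasurable)
      ?_ hBint
      (Filter.Eventually.of_forall fun x =>
        Filter.Tendsto.const_mul (gp x) (DFun_tendsto_zero (hAh x) (hlam x) s (v x)))
    filter_upwards [self_mem_nhdsWithin] with t (ht : t ∈ Set.Ioi (0:ℝ))
    exact Filter.Eventually.of_forall fun x => hDbd x t (le_of_lt ht)
  rw [htar] at hkey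
  apply hkey.congr'
  filter_upwards [self_mem_nhdsWithin] with t (ht : t ∈ Set.Ioi (0:ℝ))
  exact (hderiv t ht).symm
end
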